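/- arXiv:2604.01992 — 8 statements merged into one kernel-verified Lean document; each statement's English description precedes it below -/
import Mathlib

section
/- Let (K, v_K) be a field with a non-trivial real-valued valuation and let (A, v) be a semi-valued (K, v_K)-algebra. Then (A, v) is scalable if and only if (A°, v) is scalable, where A° carries the restricted semi-valuation. -/
noncomputable section

/-- The unit ball (ring of integers) of a real-valued additive semi-valuation. -/
def AddValuation.unitBall {A : Type*} [CommRing A] (v : AddValuation A (WithTop ℝ)) :
    Subring A where
  carrier := {a | 0 ≤ v a}
  zero_mem' := by simp only [Set.mem_setOf_eq, AddValuation.map_zero]; exact le_top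
  one_mem' := by simp only [Set.mem_setOf_eq, AddValuation.map_one]; exact le_refl _
  add_mem' := by
    intro a b ha hb
    exact le_trans (le_min ha hb) (v.map_add a b)
  mul_mem' := by
    intro a b ha hb
    simp only [Set.mem_setOf_eq, AddValuation.map_mul]
    exact add_nonneg ha hb
  neg_mem' := by
    intro a ha
    simpa only [Set.mem_setOf_eq, AddValuation.map_neg] using ha

/-- A real-valued additive valuation on a field is *non-trivial* if it does not vanish on all
of `K^×`. -/
def AddValuation.IsNontrivial {K : Type*} [Field K] (v : AddValuation K (WithTop ℝ)) : Prop :=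
  ∃ x : K, x ≠ 0 ∧ v x ≠ 0

/-- An element `a` is a *constant* of the subring `R` (with respect to the semi-valuation `v`
on the ambient ring) if `a ∈ R`, `a` is not in the kernel of `v`, and `a` divides (within `R`)
every element of `R` of larger or equal value. -/
def AddValuation.IsConstantOn {A : Type*} [CommRing A] (v : AddValuation A (WithTop ℝ))
    (R : Subring A) (a : A) : Prop :=
  a ∈ R ∧ v a ≠ ⊤ ∧ ∀ b ∈ R, v a ≤ v b → ∃ c ∈ R, a * c = b

/-- The subring `R` of the semi-valued ring `(A, v)` is *scalable* if every value
`r ∈ v(R) \ {∞}` is the value of some constant of `R`. -/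
def AddValuation.ScalableOn {A : Type*} [CommRing A] (v : AddValuation A (WithTop ℝ))
    (R : Subring A) : Prop :=
  ∀ r : WithTop ℝ, r ≠ ⊤ → (∃ x ∈ R, v x = r) → ∃ a : A, v.IsConstantOn R a ∧ v a = r

private lemma nsmul_withTop_coe (n : ℕ) (δ : ℝ) :
    n • ((δ : ℝ) : WithTop ℝ) = ((n * δ : ℝ) : WithTop ℝ) := by
  induction n with
  | zero => simp
  | succ m ih =>
      rw [succ_nsmul, ih, ← WithTop.coe_add]
      congr 1
      push_cast
      ring

private lemma neg_withTop_coe (x : ℝ) :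
    (-((x : ℝ) : WithTop ℝ)) = ((-x : ℝ) : WithTop ℝ) := by
  rfl

/-- Let `(K, v_K)` be a field with a non-trivial real-valued valuation and let
`(A, v)` be a semi-valued `(K, v_K)`-algebra.  Then `(A, v)` is scalable if and only if
`(A°, v)` is scalable. -/
theorem scalable_iff_unitBall_scalable
    {K A : Type*} [Field K] [CommRing A] [Algebra K A]
    (vK : AddValuation K (WithTop ℝ)) (hnt : vK.IsNontrivial)
    (v : AddValuation A (WithTop ℝ))
    (hext : ∀ x : K, v (algebraMap K A x) = vK x) :
    v.ScalableOn ⊤ ↔ v.ScalableOn v.unitBall := by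
  constructor
  · -- forward: scalable on A implies scalable on unit ball
    intro h r hr hex
    obtain ⟨x, hx, hvx⟩ := hex
    obtain ⟨a, ⟨-, hane, hdiv⟩, hva⟩ := h r hr ⟨x, Subring.mem_top x, hvx⟩
    have haR : a ∈ v.unitBall := by
      show (0 : WithTop ℝ) ≤ v a
      rw [hva, ← hvx]; exact hx
    refine ⟨a, ⟨haR, hane, ?_⟩, hva⟩
    intro b hb hab
    obtain ⟨c, -, hc⟩ := hdiv b (Subring.mem_top b) hab
    refine ⟨c, ?_, hc⟩
    show (0 : WithTop ℝ) ≤ v c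
    have hvb : v a + v c = v b := by rw [← v.map_mul, hc]
    have h2 : v a + 0 ≤ v a + v c := by
      rw [add_zero, hvb]; exact hab
    exact (WithTop.add_le_add_iff_left hane).mp h2
  · -- backward
    intro h r hr hex
    obtain ⟨x, -, hvx⟩ := hex
    -- find s : K with positive value δ
    obtain ⟨t, ht0, htne⟩ := hnt
    have htfin : vK t ≠ ⊤ := by
      intro htop
      have h1 : vK t + vK t⁻¹ = 0 := by
        rw [← vK.map_mul, mul_inv_cancel₀ ht0, vK.map_one]
      rw [htop, top_add] at h1
      exact (WithTop.top_ne_zero) h1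
    obtain ⟨γ, hγ⟩ := WithTop.ne_top_iff_exists.mp htfin
    have hγne : γ ≠ 0 := by
      intro h0; apply htne; rw [← hγ, h0]; rfl
    obtain ⟨s, hs0, δ, hδpos, hvs⟩ :
        ∃ s : K, s ≠ 0 ∧ ∃ δ : ℝ, 0 < δ ∧ vK s = ((δ : ℝ) : WithTop ℝ) := by
      rcases hγne.lt_or_gt with hlt | hgt
      · refine ⟨t⁻¹, inv_ne_zero ht0, -γ, by linarith, ?_⟩
        rw [vK.map_inv, ← hγ]
        rfl
      · exact ⟨t, ht0, γ, hgt, hγ.symm⟩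
    obtain ⟨ρ, hρ⟩ := WithTop.ne_top_iff_exists.mp hr
    -- choose n with ρ + n*δ ≥ 0
    obtain ⟨n, hn⟩ := exists_nat_ge (-ρ / δ)
    have hnδ : 0 ≤ ρ + n * δ := by
      have := (div_le_iff₀ hδpos).mp hn
      linarith
    have hsn : (s : K) ^ n ≠ 0 := pow_ne_zero n hs0
    set e : A := algebraMap K A (s ^ n) with he
    set e' : A := algebraMap K A ((s ^ n)⁻¹) with he'
    have hee' : e' * e = 1 := by
      rw [he, he', ← map_mul, inv_mul_cancel₀ hsn, map_one]
    have hve : v e = (((n * δ : ℝ)) : WithTop ℝ) := by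
      rw [he, hext, vK.map_pow, hvs, nsmul_withTop_coe]
    have hve' : v e' = (((-(n * δ) : ℝ)) : WithTop ℝ) := by
      rw [he', hext, vK.map_inv, vK.map_pow, hvs, nsmul_withTop_coe, neg_withTop_coe]
    -- value of scaled element
    have hvx' : v (e * x) = (((n * δ + ρ : ℝ)) : WithTop ℝ) := by
      rw [v.map_mul, hve, hvx, ← hρ, ← WithTop.coe_add]
    have hr'ne : (((n * δ + ρ : ℝ)) : WithTop ℝ) ≠ ⊤ := WithTop.coe_ne_top
    have hx'mem : e * x ∈ v.unitBall := by
      show (0 : WithTop ℝ) ≤ v (e * x)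
      rw [hvx']
      exact_mod_cast by linarith
    obtain ⟨a, ⟨haR, hane, hdiv⟩, hva⟩ :=
      h _ hr'ne ⟨e * x, hx'mem, hvx'⟩
    refine ⟨e' * a, ⟨Subring.mem_top _, ?_, ?_⟩, ?_⟩
    · rw [v.map_mul, hve', hva, ← WithTop.coe_add]
      exact WithTop.coe_ne_top
    · intro b _ hab
      have hvab : v (e' * a) = r := by
        rw [v.map_mul, hve', hva, ← WithTop.coe_add, ← hρ]
        norm_num
      have hbval : v a ≤ v (e * b) := by
        rw [v.map_mul, hve, hva]
        have : r ≤ v b := hvab ▸ hab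
        calc (((n * δ + ρ : ℝ)) : WithTop ℝ)
            = ((n * δ : ℝ) : WithTop ℝ) + r := by
              rw [← hρ, ← WithTop.coe_add]
          _ ≤ ((n * δ : ℝ) : WithTop ℝ) + v b := add_le_add_right this _
      have hbmem : e * b ∈ v.unitBall := by
        show (0 : WithTop ℝ) ≤ v (e * b)
        refine le_trans ?_ hbval
        rw [hva]
        exact_mod_cast by linarith
      obtain ⟨c, -, hc⟩ := hdiv (e * b) hbmem hbval
      refine ⟨c, Subring.mem_top c, ?_⟩
      calc e' * a * c = e' * (a * c) := by ring
        _ = e' * (e * b) := by rw [hc]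
        _ = (e' * e) * b := by ring
        _ = b := by rw [hee', one_mul]
    · rw [v.map_mul, hve', hva, ← WithTop.coe_add, ← hρ]
      norm_num
end
end

section
/- Let (K, v_K) be a field with a non-trivial real-valued valuation and let (A, v) be a scalable semi-valued (K, v_K)-algebra which is a domain with ker v = {0}. Let S be a multiplicative subset of A with 0 ∉ S, and extend v to the localization S⁻¹A by v(x/s) = v(x) − v(s). Set T = {a⁻¹s : s ∈ S, a ∈ A^×, v(a) = v(s)}, a multiplicative subset of A°. Then the unit ball (S⁻¹A)° equals the image of the localization T⁻¹A° inside S⁻¹A, and moreover (S⁻¹A, v) is scalable. -/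
noncomputable section

/-- For a multiplicative set `S` of a semi-valued ring `(A, v)`, the set
`T = {a⁻¹ s : s ∈ S, a ∈ A^×, v(a) = v(s)}` (written without inverses: `t` such that
`a * t = s` for some unit `a` and `s ∈ S` with `v(a) = v(s)`). -/
def locDenomSet {A : Type*} [CommRing A] (v : AddValuation A (WithTop ℝ))
    (S : Submonoid A) : Set A :=
  {t : A | ∃ s ∈ S, ∃ a : A, IsUnit a ∧ v a = v s ∧ a * t = s}

/-- Auxiliary: a unit has finite value. -/
lemma aux_unit_ne_top {A : Type*} [CommRing A] (v : AddValuation A (WithTop ℝ))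
    {a : A} (h : IsUnit a) : v a ≠ ⊤ := by
  obtain ⟨u, rfl⟩ := h
  intro hT
  have h1 : v ((u : A) * ↑u⁻¹) = v 1 := by rw [Units.mul_inv]
  rw [v.map_mul, v.map_one, hT, top_add] at h1
  exact (by simp : (⊤ : WithTop ℝ) ≠ 0) h1

/-- Auxiliary: by non-triviality of `vK`, there are units of arbitrarily large value. -/
lemma aux_exists_unit_ge {K A : Type*} [Field K] [CommRing A] [Nontrivial A] [Algebra K A]
    (vK : AddValuation K (WithTop ℝ)) (hnt : vK.IsNontrivial)
    (v : AddValuation A (WithTop ℝ))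
    (hext : ∀ x : K, v (algebraMap K A x) = vK x)
    (r : WithTop ℝ) (hr : r ≠ ⊤) : ∃ b : A, IsUnit b ∧ r ≤ v b := by
  obtain ⟨x, hx0, hxne⟩ := hnt
  have hxtop : vK x ≠ ⊤ := aux_unit_ne_top vK hx0.isUnit
  obtain ⟨c, hc⟩ := Option.ne_none_iff_exists'.mp hxtop
  have hc0 : c ≠ 0 := by rintro rfl; exact hxne (by rw [hc]; rfl)
  obtain ⟨ra, hra⟩ := Option.ne_none_iff_exists'.mp hr
  have hinv : vK x⁻¹ = ((-c : ℝ) : WithTop ℝ) := by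
    rw [vK.map_inv, hc]; rfl
  set y : K := if 0 < c then x else x⁻¹ with hy
  have hy0 : y ≠ 0 := by
    rw [hy]; split <;> simp [hx0]
  set d : ℝ := if 0 < c then c else -c with hd
  have hyd : vK y = (d : WithTop ℝ) := by
    rw [hy, hd]; split
    · exact hc
    · exact hinv
  have hd0 : 0 < d := by
    rw [hd]; split
    · assumption
    · rename_i h; rcases lt_or_eq_of_le (not_lt.mp h) with h' | h'
      · linarith
      · exact absurd h' hc0
  obtain ⟨n, hn⟩ := exists_nat_ge (ra / d)
  have hnd : ra ≤ n * d := by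
    rw [div_le_iff₀ hd0] at hn; linarith
  refine ⟨algebraMap K A (y ^ n),
    ((isUnit_iff_ne_zero.mpr (pow_ne_zero n hy0)).map (algebraMap K A)), ?_⟩
  rw [hext, vK.map_pow, hyd, hra]
  calc ((ra : ℝ) : WithTop ℝ) ≤ ((n * d : ℝ) : WithTop ℝ) := by exact_mod_cast hnd
    _ = n • ((d : ℝ) : WithTop ℝ) := by rw [← nsmul_eq_mul]; push_cast; rfl

/-- Auxiliary: constants (w.r.t. the whole ring) are units. -/
lemma aux_isUnit_of_const {K A : Type*} [Field K] [CommRing A] [Nontrivial A] [Algebra K A]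
    (vK : AddValuation K (WithTop ℝ)) (hnt : vK.IsNontrivial)
    (v : AddValuation A (WithTop ℝ))
    (hext : ∀ x : K, v (algebraMap K A x) = vK x)
    {a : A} (ha : v.IsConstantOn ⊤ a) : IsUnit a := by
  obtain ⟨-, hvne, hdvd⟩ := ha
  obtain ⟨b, hb, hle⟩ := aux_exists_unit_ge vK hnt v hext (v a) hvne
  obtain ⟨c, -, hc⟩ := hdvd b (Subring.mem_top _) hle
  exact isUnit_of_mul_isUnit_left (hc ▸ hb)

/-- Let `(K, v_K)` be a field with a non-trivial real-valued valuation and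
`(A, v)` a scalable semi-valued `(K, v_K)`-algebra which is a domain with `ker v = {0}`.
Let `S` be a multiplicative subset of `A` with `0 ∉ S`, and extend `v` to the localization
`S⁻¹A` (by `v(x/s) = v(x) − v(s)`; equivalently, `w` restricts to `v` along the canonical map).
Set `T = {a⁻¹s : s ∈ S, a ∈ A^×, v(a) = v(s)}`.  Then `T` is a multiplicative subset of `A°`,
the unit ball `(S⁻¹A)°` equals the image of the localization `T⁻¹A°` inside `S⁻¹A`
(i.e. it consists of the fractions `a/t` with `a ∈ A°`, `t ∈ T`), and `(S⁻¹A, v)` is scalable. -/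
theorem unitBall_of_localization
    {K A : Type*} [Field K] [CommRing A] [IsDomain A] [Algebra K A]
    (vK : AddValuation K (WithTop ℝ)) (hnt : vK.IsNontrivial)
    (v : AddValuation A (WithTop ℝ))
    (hext : ∀ x : K, v (algebraMap K A x) = vK x)
    (hker : ∀ x : A, v x = ⊤ → x = 0)
    (hscal : v.ScalableOn ⊤)
    (S : Submonoid A) (hS : (0 : A) ∉ S)
    (w : AddValuation (Localization S) (WithTop ℝ))
    (hw : ∀ x : A, w (algebraMap A (Localization S) x) = v x) :
    ((1 : A) ∈ locDenomSet v S ∧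
      ∀ t₁ ∈ locDenomSet v S, ∀ t₂ ∈ locDenomSet v S, t₁ * t₂ ∈ locDenomSet v S) ∧
    (locDenomSet v S ⊆ (v.unitBall : Set A)) ∧
    (∀ y : Localization S, y ∈ w.unitBall ↔
      ∃ a ∈ v.unitBall, ∃ t ∈ locDenomSet v S,
        y * algebraMap A (Localization S) t = algebraMap A (Localization S) a) ∧
    w.ScalableOn ⊤ := by
  have hvS : ∀ s : A, s ∈ S → v s ≠ ⊤ := by
    intro s hs h
    exact hS ((hker s h) ▸ hs)
  have hT0 : ∀ t ∈ locDenomSet v S, v t = 0 := by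
    rintro t ⟨s, hs, a, ha, hvas, hats⟩
    have hne : v a ≠ ⊤ := hvas ▸ hvS s hs
    have h2 : v a + v t = v a + 0 := by
      rw [add_zero, ← v.map_mul, hats, hvas]
    exact WithTop.add_left_cancel hne h2
  have hone : (1 : A) ∈ locDenomSet v S := ⟨1, S.one_mem, 1, isUnit_one, rfl, mul_one 1⟩
  refine ⟨⟨hone, ?_⟩, ?_, ?_, ?_⟩
  · rintro t₁ ⟨s₁, hs₁, a₁, ha₁, hv₁, he₁⟩ t₂ ⟨s₂, hs₂, a₂, ha₂, hv₂, he₂⟩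
    refine ⟨s₁ * s₂, S.mul_mem hs₁ hs₂, a₁ * a₂, ha₁.mul ha₂, ?_, ?_⟩
    · rw [v.map_mul, v.map_mul, hv₁, hv₂]
    · rw [← he₁, ← he₂]; ring
  · intro t ht
    show (0 : WithTop ℝ) ≤ v t
    exact le_of_eq (hT0 t ht).symm
  · intro y
    constructor
    · intro hy
      have hy' : (0 : WithTop ℝ) ≤ w y := hy
      obtain ⟨⟨x, s⟩, hxs⟩ := IsLocalization.surj S y
      by_cases hx : x = 0
      · subst hx
        have hy0 : y = 0 := by
          rw [map_zero] at hxs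
          exact ((IsLocalization.map_units (Localization S) s).mul_left_eq_zero).mp hxs
        exact ⟨0, (v.unitBall).zero_mem, 1, hone, by simp [hy0]⟩
      · have hvx : v x ≠ ⊤ := fun h => hx (hker x h)
        have hvs : v (s : A) ≠ ⊤ := hvS _ s.2
        have key : w y + v (s : A) = v x := by
          rw [← hw, ← hw, ← w.map_mul, hxs]
        have hsx : v (s : A) ≤ v x := by
          calc v (s : A) = 0 + v (s : A) := (zero_add _).symm
            _ ≤ w y + v (s : A) := add_le_add hy' le_rfl
            _ = v x := key
        obtain ⟨c, hcconst, hvc⟩ := hscal (v (s : A)) hvs ⟨(s : A), Subring.mem_top _, rfl⟩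
        have hcu : IsUnit c := aux_isUnit_of_const vK hnt v hext hcconst
        obtain ⟨u, hu⟩ := hcu
        subst hu
        obtain ⟨a, -, hca⟩ := hcconst.2.2 x (Subring.mem_top _) (hvc ▸ hsx)
        have hva : (0 : WithTop ℝ) ≤ v a := by
          have h1 : v (u : A) + v a = v x := by rw [← v.map_mul, hca]
          have h2 : v (u : A) + 0 ≤ v (u : A) + v a := by
            rw [h1, add_zero, hvc]; exact hsx
          exact (WithTop.add_le_add_iff_left (hvc ▸ hvs)).mp h2
        refine ⟨a, hva, (↑u⁻¹ : A) * (s : A),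
          ⟨(s : A), s.2, (u : A), u.isUnit, hvc, by rw [← mul_assoc, Units.mul_inv, one_mul]⟩, ?_⟩
        have hx' : (↑u⁻¹ : A) * x = a := by
          rw [← hca, ← mul_assoc, Units.inv_mul, one_mul]
        calc y * algebraMap A (Localization S) ((↑u⁻¹ : A) * (s : A))
            = algebraMap A (Localization S) (↑u⁻¹ : A) * (y * algebraMap A (Localization S) (s : A)) := by
              rw [map_mul]; ring
          _ = algebraMap A (Localization S) (↑u⁻¹ : A) * algebraMap A (Localization S) x := by
              rw [hxs]
          _ = algebraMap A (Localization S) a := by rw [← map_mul, hx']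
    · rintro ⟨a, ha, t, htT, hyt⟩
      have h2 : w y + v t = v a := by rw [← hw, ← hw, ← w.map_mul, hyt]
      rw [hT0 t htT, add_zero] at h2
      show (0 : WithTop ℝ) ≤ w y
      rw [h2]; exact ha
  · intro r hr hex
    obtain ⟨y, -, hwy⟩ := hex
    have hy0 : y ≠ 0 := by
      rintro rfl
      exact hr (by rw [← hwy, AddValuation.map_zero])
    obtain ⟨⟨x, s⟩, hxs⟩ := IsLocalization.surj S y
    have hx : x ≠ 0 := by
      rintro rfl
      rw [map_zero] at hxs
      exact hy0 (((IsLocalization.map_units (Localization S) s).mul_left_eq_zero).mp hxs)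
    have hvx : v x ≠ ⊤ := fun h => hx (hker x h)
    have hvs : v (s : A) ≠ ⊤ := hvS _ s.2
    have key : r + v (s : A) = v x := by
      rw [← hwy, ← hw, ← hw, ← w.map_mul, hxs]
    obtain ⟨cx, hcx, hvcx⟩ := hscal (v x) hvx ⟨x, Subring.mem_top _, rfl⟩
    obtain ⟨cs, hcs, hvcs⟩ := hscal (v (s : A)) hvs ⟨(s : A), Subring.mem_top _, rfl⟩
    have hcxu : IsUnit cx := aux_isUnit_of_const vK hnt v hext hcx
    obtain ⟨us, hus⟩ := aux_isUnit_of_const vK hnt v hext hcs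
    subst hus
    have heu : IsUnit (algebraMap A (Localization S) (cx * (↑us⁻¹ : A))) :=
      (hcxu.mul (us⁻¹).isUnit).map _
    have hwe : w (algebraMap A (Localization S) (cx * (↑us⁻¹ : A))) = r := by
      rw [hw, v.map_mul, hvcx]
      have h0 : v (us : A) + v (↑us⁻¹ : A) = 0 := by
        rw [← v.map_mul, Units.mul_inv, v.map_one]
      calc v x + v (↑us⁻¹ : A) = (r + v (s : A)) + v (↑us⁻¹ : A) := by rw [key]
        _ = r + (v (us : A) + v (↑us⁻¹ : A)) := by rw [← hvcs, add_assoc]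
        _ = r := by rw [h0, add_zero]
    refine ⟨algebraMap A (Localization S) (cx * (↑us⁻¹ : A)),
      ⟨Subring.mem_top _, by rw [hwe]; exact hr, ?_⟩, hwe⟩
    intro b _ _
    obtain ⟨E, hE⟩ := heu
    refine ⟨(↑E⁻¹ : Localization S) * b, Subring.mem_top _, ?_⟩
    rw [← hE, ← mul_assoc, Units.mul_inv, one_mul]
end
end

section
/- Let (K, v_K) be a field with a non-trivial real-valued valuation and let (A, v) be a scalable semi-valued (K, v_K)-algebra which is a domain with ker v = {0}. Let φ ∈ A be irreducible and μ ∈ ℝ ∪ {∞} with μ ≥ v(φ). Suppose the function v′ : A → ℝ ∪ {∞} given by v′(a) = max over all finite representations a = Σᵢ aᵢ φ^i (aᵢ ∈ A) of minᵢ (v(aᵢ) + i·μ) is well defined (the maximum is attained for every a ∈ A) and is a semi-valuation on A with v′(φ) = μ; when μ ≠ ∞ extend v′ to A[φ⁻¹] by v′(x·φ⁻ⁿ) = v′(x) − n·μ. Then the (φ, μ)-enlargement satisfies [A°, φ, μ] = (A[φ⁻¹], v′)° if μ ≠ ∞, and [A°, φ, μ] = (A, v′)° if μ = ∞. Moreover,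 if (A, v)° is scalable then ([A°, φ, μ], v′) is scalable. -/
noncomputable section

/-- The condition `n·μ − v(a) ≥ 0` for `n : ℤ` and `μ ∈ ℝ ∪ {∞}`, with the conventions
`n·∞ = ∞` for `n > 0`, `0·∞ = 0` and `n·∞ = −∞` for `n < 0` (so that for negative `n` the
condition can only hold when `μ` is real). -/
def enlargeCond {A : Type*} [CommRing A] (v : AddValuation A (WithTop ℝ))
    (μ : WithTop ℝ) (a : A) (n : ℤ) : Prop :=
  (0 ≤ n ∧ v a ≤ n.toNat • μ) ∨
  (n < 0 ∧ ∃ m : ℝ, μ = (m : WithTop ℝ) ∧ v a ≤ (((n : ℝ) * m : ℝ) : WithTop ℝ))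

/-- The generating set of the `(φ, μ)`-enlargement `[A°, φ, μ]` inside `A` (used when
`μ = ∞`): the unit ball `A°` together with the elements `a⁻¹ φ^n` for units `a` and `n ∈ ℕ`
with `n·μ − v(a) ≥ 0`. -/
def enlargeGen {A : Type*} [CommRing A] (v : AddValuation A (WithTop ℝ))
    (φ : A) (μ : WithTop ℝ) : Set A :=
  (v.unitBall : Set A) ∪
    {x | ∃ (u : Aˣ) (n : ℕ), enlargeCond v μ (↑u) (n : ℤ) ∧ x = (↑u⁻¹ : A) * φ ^ n}

/-- The generating set of the `(φ, μ)`-enlargement `[A°, φ, μ]` inside `A[φ⁻¹]` (used when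
`μ ≠ ∞`): the image of the unit ball `A°` together with the elements `a⁻¹ φ^n` for units
`a` and `n = p − q ∈ ℤ` with `n·μ − v(a) ≥ 0` (an element `x` equals `a⁻¹ φ^(p−q)` iff
`x · a · φ^q = φ^p` in `A[φ⁻¹]`). -/
def enlargeGenLoc {A : Type*} [CommRing A] (v : AddValuation A (WithTop ℝ))
    (φ : A) (μ : WithTop ℝ) : Set (Localization.Away φ) :=
  (algebraMap A (Localization.Away φ) '' (v.unitBall : Set A)) ∪
    {x | ∃ (u : Aˣ) (p q : ℕ), enlargeCond v μ (↑u) ((p : ℤ) - (q : ℤ)) ∧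
      x * algebraMap A (Localization.Away φ) (↑u : A) *
          algebraMap A (Localization.Away φ) φ ^ q =
        algebraMap A (Localization.Away φ) φ ^ p}


section Helpers

lemma st8_nsmul_top_eq (n : ℕ) (hn : n ≠ 0) : n • (⊤ : WithTop ℝ) = ⊤ := by
  cases n with
  | zero => exact absurd rfl hn
  | succ k => rw [succ_nsmul, add_top]

lemma st8_coe_nsmul (n : ℕ) (m : ℝ) : n • ((m : WithTop ℝ)) = ((n * m : ℝ) : WithTop ℝ) := by
  induction n with
  | zero => simp
  | succ k ih => rw [succ_nsmul, ih, ← WithTop.coe_add]; congr 1; push_cast; ring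

variable {B : Type*} [CommRing B] (w : AddValuation B (WithTop ℝ))

lemma st8_unit_val_add (u : Bˣ) : w ↑u + w ↑u⁻¹ = 0 := by
  rw [← w.map_mul]; simp [w.map_one]

lemma st8_unit_val_ne_top (u : Bˣ) : w ↑u ≠ ⊤ := by
  intro h
  have h2 := st8_unit_val_add w u
  rw [h, top_add] at h2
  exact WithTop.top_ne_zero h2

lemma st8_unit_val_exists (u : Bˣ) : ∃ t : ℝ, w ↑u = (t : WithTop ℝ) := by
  rcases WithTop.ne_top_iff_exists.mp (st8_unit_val_ne_top w u) with ⟨t, ht⟩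
  exact ⟨t, ht.symm⟩

lemma st8_unit_inv_val (u : Bˣ) (t : ℝ) (h : w ↑u = (t : WithTop ℝ)) :
    w ↑u⁻¹ = ((-t : ℝ) : WithTop ℝ) := by
  have h2 := st8_unit_val_add w u
  rw [h] at h2
  rcases WithTop.ne_top_iff_exists.mp (st8_unit_val_ne_top w u⁻¹) with ⟨s, hs⟩
  rw [← hs] at h2 ⊢
  rw [← WithTop.coe_add] at h2
  have h3 : t + s = 0 := by exact_mod_cast h2
  have h4 : s = -t := by linarith
  rw [h4]

end Helpers

/-- Let `(A, v)` be a scalable semi-valued `(K, v_K)`-algebra, a domain with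
trivial kernel, let `φ ∈ A` be irreducible and `μ ≥ v(φ)`.  Suppose the function `v′` given by
`v′(a) = max over all representations a = Σᵢ cᵢ φ^i of minᵢ (v(cᵢ) + i·μ)` is well defined
(the maximum attained) and is a semi-valuation on `A` with `v′(φ) = μ`, extended (when
`μ ≠ ∞`) to `v″` on `A[φ⁻¹]`.  Then `[A°, φ, μ] = (A[φ⁻¹], v″)°` when `μ ≠ ∞` and
`[A°, φ, μ] = (A, v′)°` when `μ = ∞`; moreover if `(A, v)°` is scalable then so is
`([A°, φ, μ], v′)`. -/
theorem enlargement_eq_unitBall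
    {K A : Type*} [Field K] [CommRing A] [IsDomain A] [Algebra K A]
    (vK : AddValuation K (WithTop ℝ)) (hnt : vK.IsNontrivial)
    (v : AddValuation A (WithTop ℝ))
    (hext : ∀ x : K, v (algebraMap K A x) = vK x)
    (hker : ∀ x : A, v x = ⊤ → x = 0)
    (hscal : v.ScalableOn ⊤)
    (φ : A) (hφ : Irreducible φ)
    (μ : WithTop ℝ) (hμ : v φ ≤ μ)
    (v' : AddValuation A (WithTop ℝ))
    (hv' : ∀ a : A, IsGreatest
      {r : WithTop ℝ | ∃ (k : ℕ) (c : ℕ → A),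
        a = ∑ i ∈ Finset.range (k + 1), c i * φ ^ i ∧
        r = (Finset.range (k + 1)).inf (fun i => v (c i) + i • μ)} (v' a))
    (hv'φ : v' φ = μ)
    (v'' : AddValuation (Localization.Away φ) (WithTop ℝ))
    (hv'' : μ ≠ ⊤ → ∀ a : A, v'' (algebraMap A (Localization.Away φ) a) = v' a) :
    (μ = ⊤ →
      Subring.closure (enlargeGen v φ μ) = v'.unitBall ∧
      (v.ScalableOn v.unitBall → v'.ScalableOn (Subring.closure (enlargeGen v φ μ)))) ∧
    (μ ≠ ⊤ →
      Subring.closure (enlargeGenLoc v φ μ) = v''.unitBall ∧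
      (v.ScalableOn v.unitBall → v''.ScalableOn (Subring.closure (enlargeGenLoc v φ μ)))) := by
  classical
  -- v' dominates v
  have hge : ∀ a : A, v a ≤ v' a := by
    intro a
    refine (hv' a).2 ⟨0, fun _ => a, by simp, by simp⟩
  -- on units, v' agrees with v
  have hvu : ∀ u : Aˣ, v' (↑u : A) = v (↑u : A) := by
    intro u
    obtain ⟨s, hs⟩ := st8_unit_val_exists v u
    obtain ⟨t, ht⟩ := st8_unit_val_exists v u⁻¹
    obtain ⟨s', hs'⟩ := st8_unit_val_exists v' u
    obtain ⟨t', ht'⟩ := st8_unit_val_exists v' u⁻¹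
    have h1 := st8_unit_val_add v u
    have h2 := st8_unit_val_add v' u
    have h3 := hge ↑u
    have h4 := hge ↑u⁻¹
    rw [hs, ht, ← WithTop.coe_add] at h1
    rw [hs', ht', ← WithTop.coe_add] at h2
    rw [hs, hs'] at h3
    rw [ht, ht'] at h4
    have h1' : s + t = 0 := by exact_mod_cast h1
    have h2' : s' + t' = 0 := by exact_mod_cast h2
    have h3' : s ≤ s' := by exact_mod_cast h3
    have h4' : t ≤ t' := by exact_mod_cast h4
    rw [hs, hs']
    norm_cast
    linarith
  -- every attained real value is attained by a unit
  have hunit : ∀ s : ℝ, (∃ c : A, v c = (s : WithTop ℝ)) → ∃ u : Aˣ, v (↑u : A) = (s : WithTop ℝ) := by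
    intro s ⟨c, hc⟩
    -- there is a scalar of arbitrarily large valuation
    obtain ⟨x, hx0, hxv⟩ := hnt
    have hxu : IsUnit x := hx0.isUnit
    obtain ⟨t, ht⟩ := st8_unit_val_exists vK hxu.unit
    rw [hxu.unit_spec] at ht
    have ht0 : t ≠ 0 := by
      intro h; rw [h] at ht; exact hxv (by exact_mod_cast ht)
    -- choose y with vK y = t' > 0
    obtain ⟨y, t', hy0, hyv, ht'⟩ : ∃ (y : K) (t' : ℝ), y ≠ 0 ∧ vK y = (t' : WithTop ℝ) ∧ 0 < t' := by
      rcases lt_or_gt_of_ne ht0 with h | h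
      · refine ⟨x⁻¹, -t, inv_ne_zero hx0, ?_, by linarith⟩
        have := st8_unit_inv_val vK hxu.unit t (by rw [hxu.unit_spec]; exact ht)
        rwa [← hxu.unit_spec, ← Units.val_inv_eq_inv_val]
      · exact ⟨x, t, hx0, ht, h⟩
    obtain ⟨n, hn⟩ := exists_nat_ge (s / t')
    have hnt' : s ≤ n * t' := by
      have := (div_le_iff₀ ht').mp hn
      linarith
    -- the scalar y^n
    have hlv : v (algebraMap K A (y ^ n)) = ((n * t' : ℝ) : WithTop ℝ) := by
      rw [hext, vK.map_pow, hyv, st8_coe_nsmul]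
    have hlu : IsUnit (algebraMap K A (y ^ n)) :=
      (hy0.isUnit.pow n).map (algebraMap K A)
    -- constant of value s
    obtain ⟨a, ⟨_, hane, hdvd⟩, hav⟩ := hscal (s : WithTop ℝ) WithTop.coe_ne_top ⟨c, trivial, hc⟩
    obtain ⟨e, _, hae⟩ := hdvd (algebraMap K A (y ^ n)) trivial
      (by rw [hav, hlv]; exact_mod_cast hnt')
    have hau : IsUnit a := isUnit_of_mul_isUnit_left (hae ▸ hlu)
    exact ⟨hau.unit, by rw [hau.unit_spec]; exact hav⟩
  constructor
  · -- case μ = ⊤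
    intro htop
    subst htop
    have htop1 : ∀ i : ℕ, i ≠ 0 → (i • (⊤ : WithTop ℝ)) = ⊤ := st8_nsmul_top_eq
    have hEq : Subring.closure (enlargeGen v φ ⊤) = v'.unitBall := by
      apply le_antisymm
      · apply Subring.closure_le.mpr
        rintro x (hx | ⟨u, n, hcond, rfl⟩)
        · exact le_trans hx (hge x)
        · have hvn : v (↑u : A) ≤ (n : ℤ).toNat • (⊤ : WithTop ℝ) := by
            rcases hcond with ⟨_, h⟩ | ⟨h, _⟩
            · exact h
            · exact absurd h (by omega)
          show (0 : WithTop ℝ) ≤ v' ((↑u⁻¹ : A) * φ ^ n)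
          rw [v'.map_mul, v'.map_pow, hv'φ]
          rcases Nat.eq_zero_or_pos n with hn | hn
          · subst hn
            simp only [zero_smul, add_zero]
            have hvn' : v (↑u : A) ≤ 0 := by simpa using hvn
            obtain ⟨t, ht⟩ := st8_unit_val_exists v u
            have hs0 : t ≤ 0 := by rw [ht] at hvn'; exact_mod_cast hvn'
            rw [hvu, st8_unit_inv_val v u t ht]
            exact_mod_cast neg_nonneg.mpr hs0
          · rw [htop1 n hn.ne', add_top]
            exact le_top
      · intro a ha
        have ha' : (0 : WithTop ℝ) ≤ v' a := ha
        obtain ⟨k, c, hrep, hinf⟩ := (hv' a).1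
        rw [hrep]
        apply Subring.sum_mem
        intro i hi
        have hterm : (0 : WithTop ℝ) ≤ v (c i) + i • (⊤ : WithTop ℝ) := by
          refine le_trans ha' ?_
          rw [hinf]
          exact Finset.inf_le hi
        by_cases hc0 : c i = 0
        · rw [hc0, zero_mul]; exact Subring.zero_mem _
        · have hcine : v (c i) ≠ ⊤ := fun h => hc0 (hker _ h)
          obtain ⟨s, hs⟩ := WithTop.ne_top_iff_exists.mp hcine
          rcases Nat.eq_zero_or_pos i with hi0 | hi0
          · subst hi0
            have : (0 : WithTop ℝ) ≤ v (c 0) := by simpa using hterm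
            rw [pow_zero, mul_one]
            exact Subring.subset_closure (Or.inl this)
          · obtain ⟨u0, hu0⟩ := hunit s ⟨c i, hs.symm⟩
            have hdecomp : c i * φ ^ i = ((↑u0⁻¹ : A) * c i) * ((↑u0 : A) * φ ^ i) := by
              rw [← mul_assoc, mul_comm ((↑u0⁻¹ : A) * c i) (↑u0 : A), ← mul_assoc,
                Units.mul_inv, one_mul]
            rw [hdecomp]
            apply Subring.mul_mem
            · apply Subring.subset_closure
              left
              show (0 : WithTop ℝ) ≤ v ((↑u0⁻¹ : A) * c i)
              rw [v.map_mul, st8_unit_inv_val v u0 s hu0, ← hs, ← WithTop.coe_add]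
              exact_mod_cast le_of_eq (by ring)
            · apply Subring.subset_closure
              right
              refine ⟨u0⁻¹, i, Or.inl ⟨by omega, ?_⟩, by rw [inv_inv]⟩
              rw [Int.toNat_natCast, htop1 i hi0.ne']
              exact le_top
    refine ⟨hEq, ?_⟩
    intro _ r hrtop hex
    obtain ⟨x, hxmem, hxval⟩ := hex
    rw [hEq] at hxmem
    have hx0 : (0 : WithTop ℝ) ≤ v' x := hxmem
    obtain ⟨k, c, hrep, hinf⟩ := (hv' x).1
    obtain ⟨i0, hi0mem, hi0⟩ :=
      Finset.exists_mem_eq_inf (Finset.range (k + 1)) Finset.nonempty_range_add_one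
        (fun i => v (c i) + i • (⊤ : WithTop ℝ))
    have hr : r = v (c i0) + i0 • (⊤ : WithTop ℝ) := by
      rw [← hxval, hinf, hi0]
    have hne2 : v (c i0) ≠ ⊤ ∧ i0 • (⊤ : WithTop ℝ) ≠ ⊤ :=
      WithTop.add_ne_top.mp (hr ▸ hrtop)
    have hi00 : i0 = 0 := by
      by_contra h
      exact hne2.2 (htop1 i0 h)
    subst hi00
    have hr0 : r = v (c 0) := by simpa using hr
    obtain ⟨s, hs⟩ := WithTop.ne_top_iff_exists.mp hne2.1
    have hsr : r = (s : WithTop ℝ) := by rw [hr0, ← hs]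
    obtain ⟨u0, hu0⟩ := hunit s ⟨c 0, hs.symm⟩
    have hs0 : (0 : WithTop ℝ) ≤ (s : WithTop ℝ) := by
      rw [← hsr, ← hxval]; exact hx0
    refine ⟨↑u0, ⟨?_, ?_, ?_⟩, by rw [hvu, hu0, hsr]⟩
    · rw [hEq]
      show (0 : WithTop ℝ) ≤ v' ↑u0
      rw [hvu, hu0]; exact hs0
    · rw [hvu, hu0]; exact WithTop.coe_ne_top
    · intro b hb hle
      refine ⟨(↑u0⁻¹ : A) * b, ?_, by rw [← mul_assoc, Units.mul_inv, one_mul]⟩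
      rw [hEq]
      show (0 : WithTop ℝ) ≤ v' ((↑u0⁻¹ : A) * b)
      have hb' : (s : WithTop ℝ) ≤ v' b := by rw [hvu, hu0] at hle; exact hle
      calc (0 : WithTop ℝ) = ↑(-s) + ↑s := by
            rw [← WithTop.coe_add]; norm_num
        _ ≤ ↑(-s) + v' b := add_le_add_right hb' _
        _ = v' ((↑u0⁻¹ : A) * b) := by
            rw [v'.map_mul, hvu, st8_unit_inv_val v u0 s hu0]
  · -- case μ ≠ ⊤
    intro hne
    obtain ⟨m, hm⟩ := WithTop.ne_top_iff_exists.mp hne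
    subst hm
    have hv2 := hv'' hne
    set f := algebraMap A (Localization.Away φ) with hf
    have hfu : IsUnit (f φ) := IsLocalization.Away.algebraMap_isUnit φ
    set w : (Localization.Away φ)ˣ := hfu.unit with hwdef
    have hwv : (↑w : Localization.Away φ) = f φ := hfu.unit_spec
    have hwval : v'' ↑w = (m : WithTop ℝ) := by rw [hwv, hv2, hv'φ]
    have hnat : ∀ p : ℕ, v'' ↑(w ^ p) = (((p : ℝ) * m : ℝ) : WithTop ℝ) := by
      intro p
      rw [Units.val_pow_eq_pow_val, v''.map_pow, hwval, st8_coe_nsmul]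
    have hwz : ∀ n : ℤ, v'' ↑(w ^ n) = (((n : ℝ) * m : ℝ) : WithTop ℝ) := by
      intro n
      cases n with
      | ofNat p =>
        rw [Int.ofNat_eq_natCast, zpow_natCast, hnat p]
        norm_num
      | negSucc p =>
        rw [zpow_negSucc,
          st8_unit_inv_val v'' (w ^ (p + 1)) (((p + 1 : ℕ) : ℝ) * m) (by exact_mod_cast hnat (p + 1))]
        congr 1
        push_cast
        ring
    have hfp : ∀ p : ℕ, f φ ^ p = (↑(w ^ ((p : ℤ))) : Localization.Away φ) := by
      intro p; rw [zpow_natCast, Units.val_pow_eq_pow_val, hwv]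
    -- key membership lemma
    have hkey : ∀ (cc : A) (n : ℤ), (0 : WithTop ℝ) ≤ v cc + (((n : ℝ) * m : ℝ) : WithTop ℝ) →
        f cc * ↑(w ^ n) ∈ Subring.closure (enlargeGenLoc v φ (m : WithTop ℝ)) := by
      intro cc n h
      by_cases hc0 : cc = 0
      · rw [hc0, map_zero, zero_mul]; exact Subring.zero_mem _
      have hcne : v cc ≠ ⊤ := fun hh => hc0 (hker _ hh)
      obtain ⟨s, hs⟩ := WithTop.ne_top_iff_exists.mp hcne
      have hsn : 0 ≤ s + (n : ℝ) * m := by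
        rw [← hs, ← WithTop.coe_add] at h; exact_mod_cast h
      obtain ⟨u0, hu0⟩ := hunit s ⟨cc, hs.symm⟩
      have h1 : f (↑u0⁻¹ : A) * f (↑u0 : A) = 1 := by
        rw [← map_mul, Units.inv_mul, map_one]
      have hdecomp : f cc * ↑(w ^ n) = f ((↑u0⁻¹ : A) * cc) * (f (↑u0 : A) * ↑(w ^ n)) := by
        calc f cc * ↑(w ^ n) = (f (↑u0⁻¹ : A) * f (↑u0 : A)) * (f cc * ↑(w ^ n)) := by
              rw [h1, one_mul]
          _ = f ((↑u0⁻¹ : A) * cc) * (f (↑u0 : A) * ↑(w ^ n)) := by rw [map_mul]; ring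
      rw [hdecomp]
      apply Subring.mul_mem
      · apply Subring.subset_closure
        left
        refine ⟨(↑u0⁻¹ : A) * cc, ?_, rfl⟩
        show (0 : WithTop ℝ) ≤ v _
        rw [v.map_mul, st8_unit_inv_val v u0 s hu0, ← hs, ← WithTop.coe_add]
        exact_mod_cast le_of_eq (by ring)
      · apply Subring.subset_closure
        right
        have hpq : ((n.toNat : ℤ)) - (((-n).toNat : ℤ)) = n := by omega
        have hvinv : v (↑u0⁻¹ : A) = ((-s : ℝ) : WithTop ℝ) := st8_unit_inv_val v u0 s hu0
        have hcond : enlargeCond v (m : WithTop ℝ) (↑u0⁻¹ : A) n := by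
          rcases le_or_gt 0 n with hn0 | hn0
          · left
            refine ⟨hn0, ?_⟩
            rw [hvinv, st8_coe_nsmul]
            have hc2 : ((n.toNat : ℝ)) = (n : ℝ) := by exact_mod_cast Int.toNat_of_nonneg hn0
            rw [hc2]
            exact_mod_cast by linarith
          · right
            exact ⟨hn0, m, rfl, by rw [hvinv]; exact_mod_cast by linarith⟩
        refine ⟨u0⁻¹, n.toNat, (-n).toNat, by rw [hpq]; exact hcond, ?_⟩
        show f (↑u0 : A) * ↑(w ^ n) * f (↑u0⁻¹ : A) * f φ ^ (-n).toNat = f φ ^ n.toNat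
        rw [hfp, hfp]
        have h2 : w ^ n * w ^ (((-n).toNat : ℤ)) = w ^ ((n.toNat : ℤ)) := by
          rw [← zpow_add]; congr 1; omega
        calc f (↑u0 : A) * ↑(w ^ n) * f (↑u0⁻¹ : A) * ↑(w ^ (((-n).toNat : ℤ)))
            = (f (↑u0⁻¹ : A) * f (↑u0 : A)) * ↑(w ^ n * w ^ (((-n).toNat : ℤ))) := by
              rw [Units.val_mul]; ring
          _ = ↑(w ^ ((n.toNat : ℤ))) := by rw [h1, h2, one_mul]
    -- the equality of subrings
    have hEq2 : Subring.closure (enlargeGenLoc v φ (m : WithTop ℝ)) = v''.unitBall := by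
      apply le_antisymm
      · apply Subring.closure_le.mpr
        rintro x (⟨a, ha, rfl⟩ | ⟨u, p, q, hcond, heq⟩)
        · show (0 : WithTop ℝ) ≤ v'' (f a)
          rw [hv2]
          exact le_trans ha (hge a)
        · show (0 : WithTop ℝ) ≤ v'' x
          obtain ⟨s, hs⟩ := st8_unit_val_exists v u
          have hval := congrArg v'' heq
          rw [v''.map_mul, v''.map_mul, v''.map_pow, v''.map_pow, hv2, hv2, hvu, hs, hv'φ,
            st8_coe_nsmul, st8_coe_nsmul] at hval
          have hsle : s ≤ ((p : ℝ) - (q : ℝ)) * m := by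
            rcases hcond with ⟨hn0, hcnd⟩ | ⟨hn0, m', hm', hcnd⟩
            · rw [hs, st8_coe_nsmul] at hcnd
              have hc3 : ((((p : ℤ) - (q : ℤ)).toNat : ℝ)) = (p : ℝ) - q := by
                exact_mod_cast Int.toNat_of_nonneg hn0
              have hc4 : s ≤ ((((p : ℤ) - (q : ℤ)).toNat : ℝ)) * m := by exact_mod_cast hcnd
              rw [hc3] at hc4
              exact hc4
            · have hm'' : m' = m := by exact_mod_cast hm'.symm
              subst hm''
              rw [hs] at hcnd
              have hc4 : s ≤ (((p : ℤ) - (q : ℤ) : ℤ) : ℝ) * m' := by exact_mod_cast hcnd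
              rw [show ((((p : ℤ) - (q : ℤ) : ℤ)) : ℝ) = (p : ℝ) - q by push_cast; ring] at hc4
              exact hc4
          cases hvx : v'' x with
          | top => exact le_top
          | coe t =>
            rw [hvx, ← WithTop.coe_add, ← WithTop.coe_add] at hval
            have hval' : t + s + (q : ℝ) * m = (p : ℝ) * m := by exact_mod_cast hval
            exact_mod_cast by nlinarith [hsle]
      · intro z hz
        have hz0 : (0 : WithTop ℝ) ≤ v'' z := hz
        obtain ⟨q, a, hza⟩ := IsLocalization.Away.surj φ z
        have hva : v' a = v'' z + ((q * m : ℝ) : WithTop ℝ) := by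
          rw [← hv2, ← hza, v''.map_mul, v''.map_pow, hv2, hv'φ, st8_coe_nsmul]
        obtain ⟨k, c, hrep, hinf⟩ := (hv' a).1
        have hxsum : z = ∑ i ∈ Finset.range (k + 1), f (c i) * ↑(w ^ ((i : ℤ) - (q : ℤ))) := by
          have hq : z * ↑(w ^ ((q : ℤ))) = f a := by rw [← hfp]; exact hza
          have hz2 : z = f a * ↑(w ^ (-(q : ℤ))) := by
            rw [← hq, mul_assoc, ← Units.val_mul, ← zpow_add, add_neg_cancel, zpow_zero,
              Units.val_one, mul_one]
          rw [hz2, hrep, map_sum, Finset.sum_mul]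
          refine Finset.sum_congr rfl fun i hi => ?_
          rw [map_mul, map_pow, hf]
          rw [hfp, mul_assoc, ← Units.val_mul, ← zpow_add, sub_eq_add_neg]
        rw [hxsum]
        apply Subring.sum_mem
        intro i hi
        apply hkey
        have hterm : v'' z + ((q * m : ℝ) : WithTop ℝ) ≤ v (c i) + ((i * m : ℝ) : WithTop ℝ) := by
          rw [← hva, hinf, ← st8_coe_nsmul]
          exact Finset.inf_le hi
        cases hvc : v (c i) with
        | top => rw [top_add]; exact le_top
        | coe s =>
          rw [hvc, ← WithTop.coe_add] at hterm
          have h5 : ((q * m : ℝ) : WithTop ℝ) ≤ ((s + i * m : ℝ) : WithTop ℝ) := by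
            calc ((q * m : ℝ) : WithTop ℝ) = 0 + ((q * m : ℝ) : WithTop ℝ) := by rw [zero_add]
              _ ≤ v'' z + ((q * m : ℝ) : WithTop ℝ) := add_le_add_left hz0 _
              _ ≤ _ := hterm
          have h6 : (q : ℝ) * m ≤ s + (i : ℝ) * m := by exact_mod_cast h5
          rw [← WithTop.coe_add]
          exact_mod_cast by push_cast; linarith
    refine ⟨hEq2, ?_⟩
    intro _ r hrtop hex
    obtain ⟨z, hzmem, hzval⟩ := hex
    rw [hEq2] at hzmem
    have hz0 : (0 : WithTop ℝ) ≤ v'' z := hzmem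
    obtain ⟨r', hr'⟩ := WithTop.ne_top_iff_exists.mp hrtop
    have hr'0 : 0 ≤ r' := by
      have := hzval ▸ hz0
      rw [← hr'] at this
      exact_mod_cast this
    obtain ⟨q, a, hza⟩ := IsLocalization.Away.surj φ z
    have hva : v' a = ((r' + q * m : ℝ) : WithTop ℝ) := by
      rw [← hv2, ← hza, v''.map_mul, v''.map_pow, hv2, hv'φ, st8_coe_nsmul, hzval, ← hr',
        ← WithTop.coe_add]
    obtain ⟨k, c, hrep, hinf⟩ := (hv' a).1
    obtain ⟨i0, hi0mem, hi0⟩ :=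
      Finset.exists_mem_eq_inf (Finset.range (k + 1)) Finset.nonempty_range_add_one
        (fun i => v (c i) + i • ((m : ℝ) : WithTop ℝ))
    have hri : v (c i0) + ((i0 * m : ℝ) : WithTop ℝ) = ((r' + q * m : ℝ) : WithTop ℝ) := by
      rw [← st8_coe_nsmul, ← hi0, ← hinf, hva]
    have hvcne : v (c i0) ≠ ⊤ := by
      intro hh
      rw [hh, top_add] at hri
      exact WithTop.coe_ne_top hri.symm
    obtain ⟨s, hs⟩ := WithTop.ne_top_iff_exists.mp hvcne
    have hsum : s + (i0 : ℝ) * m = r' + (q : ℝ) * m := by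
      rw [← hs, ← WithTop.coe_add] at hri
      exact_mod_cast hri
    obtain ⟨u0, hu0⟩ := hunit s ⟨c i0, hs.symm⟩
    set n : ℤ := (i0 : ℤ) - (q : ℤ) with hn
    have hnm : s + (n : ℝ) * m = r' := by
      rw [hn]
      push_cast
      linarith
    set z0 : Localization.Away φ := f (↑u0 : A) * ↑(w ^ n) with hz0def
    have hz0mem : z0 ∈ Subring.closure (enlargeGenLoc v φ (m : WithTop ℝ)) := by
      apply hkey
      rw [hu0, ← WithTop.coe_add, hnm]
      exact_mod_cast hr'0
    have hvz0 : v'' z0 = ((r' : ℝ) : WithTop ℝ) := by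
      rw [hz0def, v''.map_mul, hv2, hvu, hu0, hwz, ← WithTop.coe_add, hnm]
    set Z : (Localization.Away φ)ˣ :=
      (Units.map (f : A →* Localization.Away φ) u0) * w ^ n with hZdef
    have hZ : (↑Z : Localization.Away φ) = z0 := by
      rw [hZdef, Units.val_mul, Units.coe_map, hz0def]
      rfl
    refine ⟨z0, ⟨hz0mem, by rw [hvz0]; exact WithTop.coe_ne_top, ?_⟩, by rw [hvz0, hr']⟩
    intro b hb hle
    refine ⟨(↑Z⁻¹ : Localization.Away φ) * b, ?_, ?_⟩
    · rw [hEq2]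
      show (0 : WithTop ℝ) ≤ v'' ((↑Z⁻¹ : Localization.Away φ) * b)
      have hZval : v'' ↑Z = ((r' : ℝ) : WithTop ℝ) := by rw [hZ]; exact hvz0
      have hle' : ((r' : ℝ) : WithTop ℝ) ≤ v'' b := by rw [hvz0] at hle; exact hle
      calc (0 : WithTop ℝ) = ↑(-r') + ↑r' := by rw [← WithTop.coe_add]; norm_num
        _ ≤ ↑(-r') + v'' b := add_le_add_right hle' _
        _ = v'' ((↑Z⁻¹ : Localization.Away φ) * b) := by
            rw [v''.map_mul, st8_unit_inv_val v'' Z r' hZval]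
    · rw [← hZ, ← mul_assoc, Units.mul_inv, one_mul]
end
end

section
/- Let (K, v_K) be a field with a non-trivial real-valued valuation and let (A, v) be a scalable semi-valued (K, v_K)-algebra which is a domain with ker v = {0}, such that ⋂_{n≥0} φⁿA = {0} for the prime element φ ∈ A below. Let θ, α ∈ A^× be units with v(θ) = v(φ) and v(α) > v(φ) (so θ⁻¹α and θ⁻¹φ lie in A°). Then the kernel of the A°-algebra homomorphism A°[X] → A sending X to α⁻¹φ is the principal ideal generated by (θ⁻¹α)·X − θ⁻¹φ; in particular A°[α⁻¹φ] ≅ A°[X]/((θ⁻¹α)·X − θ⁻¹φ). -/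
noncomputable section

lemma aux_sub_le {u w : ℝ} {y : WithTop ℝ} (h : (u : WithTop ℝ) ≤ ↑w + y) :
    (↑(u - w) : WithTop ℝ) ≤ y := by
  induction y using WithTop.recTopCoe with
  | top => exact le_top
  | coe m =>
    rw [← WithTop.coe_add, WithTop.coe_le_coe] at h
    rw [WithTop.coe_le_coe]
    linarith

lemma aux_pow_val {A : Type*} [CommRing A] (v : AddValuation A (WithTop ℝ)) (c : A) (γ : ℝ)
    (h : v c = ↑γ) (n : ℕ) : v (c ^ n) = ↑((n : ℝ) * γ) := by
  induction n with
  | zero => simp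
  | succ n ih =>
    rw [pow_succ, v.map_mul, ih, h, ← WithTop.coe_add]
    congr 1; push_cast; ring

lemma aux_mem_unitBall {A : Type*} [CommRing A] (v : AddValuation A (WithTop ℝ)) (x : A) :
    x ∈ v.unitBall ↔ 0 ≤ v x := Iff.rfl

/-- Let `(A, v)` be a scalable semi-valued `(K, v_K)`-algebra, a domain with
trivial kernel and `⋂ₙ φⁿA = 0` for the prime `φ` below.  Let `θ, α ∈ A^×` with `v(θ) = v(φ)`
and `v(α) > v(φ)`.  Then the kernel of the `A°`-algebra map `A°[X] → A`, `X ↦ α⁻¹φ`, is the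
principal ideal generated by `(θ⁻¹α)·X − θ⁻¹φ`. -/
theorem kernel_aeval_enlargement_infinite
    {K A : Type*} [Field K] [CommRing A] [IsDomain A] [Algebra K A]
    (vK : AddValuation K (WithTop ℝ)) (hnt : vK.IsNontrivial)
    (v : AddValuation A (WithTop ℝ))
    (hext : ∀ x : K, v (algebraMap K A x) = vK x)
    (hker : ∀ x : A, v x = ⊤ → x = 0)
    (hscal : v.ScalableOn ⊤)
    (φ : A) (hφ : Prime φ)
    (hsep : ∀ x : A, (∀ n : ℕ, φ ^ n ∣ x) → x = 0)
    (θ α : Aˣ) (hθ : v ↑θ = v φ) (hα : v φ < v ↑α)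
    (t s : v.unitBall)
    (ht : (t : A) = ↑θ⁻¹ * ↑α) (hs : (s : A) = ↑θ⁻¹ * φ) :
    RingHom.ker (Polynomial.aeval (R := v.unitBall) ((↑α⁻¹ : A) * φ)) =
      Ideal.span {Polynomial.C t * Polynomial.X - Polynomial.C s} := by
  classical
  have hφ0 : φ ≠ 0 := hφ.ne_zero
  have hvφtop : v φ ≠ ⊤ := fun h => hφ0 (hker _ h)
  obtain ⟨a, ha⟩ := WithTop.ne_top_iff_exists.mp hvφtop
  have hunit : ∀ u : Aˣ, v ↑u + v ↑u⁻¹ = 0 := by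
    intro u
    rw [← v.map_mul, Units.mul_inv, v.map_one]
  have hune : ∀ u : Aˣ, v ↑u ≠ ⊤ := by
    intro u h
    have h2 := hunit u
    rw [h, top_add] at h2
    exact absurd h2 (by simp)
  have hinv : ∀ (u : Aˣ) (x : ℝ), v ↑u = ↑x → v (↑u⁻¹ : A) = ↑(-x) := by
    intro u x hx
    obtain ⟨y, hy⟩ := WithTop.ne_top_iff_exists.mp (hune u⁻¹)
    have h2 := hunit u
    rw [hx, ← hy, ← WithTop.coe_add] at h2
    have h3 : x + y = 0 := by exact_mod_cast h2
    rw [← hy, WithTop.coe_eq_coe]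
    linarith
  obtain ⟨b, hb⟩ := WithTop.ne_top_iff_exists.mp (hune α)
  have hvα : v ↑α = (↑b : WithTop ℝ) := hb.symm
  have hvαinv : v (↑α⁻¹ : A) = ↑(-b) := hinv α b hvα
  have hvθinv : v (↑θ⁻¹ : A) = ↑(-a) := hinv θ a (by rw [hθ, ← ha])
  set γ : ℝ := a - b with hγdef
  set c : A := (↑α⁻¹ : A) * φ with hc
  have hvc : v c = ↑γ := by
    rw [hc, v.map_mul, hvαinv, ← ha, ← WithTop.coe_add]
    exact WithTop.coe_eq_coe.mpr (by rw [hγdef]; ring)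
  have hab : a < b := by
    have h2 := hα
    rw [← ha, hvα, WithTop.coe_lt_coe] at h2
    exact h2
  have hγ0 : γ < 0 := by rw [hγdef]; linarith
  have halg : (algebraMap v.unitBall A : ↥v.unitBall →+* A) = v.unitBall.subtype := rfl
  have hinj : Function.Injective (algebraMap v.unitBall A) := fun x y h => Subtype.ext h
  ext p
  rw [RingHom.mem_ker, Ideal.mem_span_singleton]
  constructor
  · intro hp
    set P : Polynomial A := p.map (algebraMap v.unitBall A) with hP
    have hProot : P.eval c = 0 := by
      rw [hP, Polynomial.eval_map, ← Polynomial.aeval_def]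
      exact hp
    obtain ⟨q, hq⟩ := Polynomial.dvd_iff_isRoot.mpr hProot
    have hP0 : ∀ j, 0 ≤ v (P.coeff j) := by
      intro j
      rw [hP, Polynomial.coeff_map]
      exact (p.coeff j).2
    have hc0 : P.coeff 0 = -(c * q.coeff 0) := by
      rw [hq]
      simp [Polynomial.mul_coeff_zero]
    have hcsucc : ∀ j : ℕ, P.coeff (j + 1) = q.coeff j - c * q.coeff (j + 1) := by
      intro j
      rw [hq, sub_mul]
      simp [Polynomial.coeff_X_mul, Polynomial.coeff_C_mul]
    have key : ∀ i : ℕ, c ^ (i + 1) * q.coeff i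
        = -(∑ j ∈ Finset.range (i + 1), P.coeff j * c ^ j) := by
      intro i
      induction i with
      | zero => rw [Finset.sum_range_one, hc0]; ring
      | succ i ih =>
        have h1 : c * q.coeff (i + 1) = q.coeff i - P.coeff (i + 1) := by
          rw [hcsucc i]; ring
        calc c ^ (i + 1 + 1) * q.coeff (i + 1)
            = c ^ (i + 1) * (c * q.coeff (i + 1)) := by ring
          _ = c ^ (i + 1) * q.coeff i - P.coeff (i + 1) * c ^ (i + 1) := by rw [h1]; ring
          _ = -(∑ j ∈ Finset.range (i + 1), P.coeff j * c ^ j)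
                - P.coeff (i + 1) * c ^ (i + 1) := by rw [ih]
          _ = -(∑ j ∈ Finset.range (i + 1 + 1), P.coeff j * c ^ j) := by
                conv_rhs => rw [Finset.sum_range_succ]
                ring
    have hqcoeff : ∀ i : ℕ, (↑(-γ) : WithTop ℝ) ≤ v (q.coeff i) := by
      intro i
      have hsum : (↑((i : ℝ) * γ) : WithTop ℝ)
          ≤ v (∑ j ∈ Finset.range (i + 1), P.coeff j * c ^ j) := by
        apply AddValuation.map_le_sum
        intro j hj
        rw [v.map_mul, aux_pow_val v c γ hvc j]
        have hj' : (j : ℝ) ≤ (i : ℝ) := by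
          exact_mod_cast Nat.lt_succ_iff.mp (Finset.mem_range.mp hj)
        calc (↑((i : ℝ) * γ) : WithTop ℝ) ≤ ↑((j : ℝ) * γ) := by
              rw [WithTop.coe_le_coe]; nlinarith
          _ = 0 + ↑((j : ℝ) * γ) := by rw [zero_add]
          _ ≤ v (P.coeff j) + ↑((j : ℝ) * γ) := add_le_add_left (hP0 j) _
      have hv1 : (↑((i : ℝ) * γ) : WithTop ℝ) ≤ v (c ^ (i + 1) * q.coeff i) := by
        rw [key i, v.map_neg]; exact hsum
      rw [v.map_mul, aux_pow_val v c γ hvc (i + 1)] at hv1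
      have h2 := aux_sub_le hv1
      have h3 : (i : ℝ) * γ - ((i + 1 : ℕ) : ℝ) * γ = -γ := by push_cast; ring
      rwa [h3] at h2
    set u : A := ↑θ * (↑α⁻¹ : A) with hu
    have hvu : v u = ↑γ := by
      rw [hu, v.map_mul, hθ, ← ha, hvαinv, ← WithTop.coe_add]
      exact WithTop.coe_eq_coe.mpr (by rw [hγdef]; ring)
    set r' : Polynomial A := Polynomial.C u * q with hr'
    have hr'c : (↑r'.coeffs : Set A) ⊆ v.unitBall := by
      intro x hx
      obtain ⟨n, -, rfl⟩ := Polynomial.mem_coeffs_iff.mp hx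
      rw [SetLike.mem_coe, aux_mem_unitBall, hr', Polynomial.coeff_C_mul, v.map_mul, hvu]
      calc (0 : WithTop ℝ) = ↑γ + ↑(-γ) := by
            rw [← WithTop.coe_add]; norm_num
        _ ≤ ↑γ + v (q.coeff n) := add_le_add_right (hqcoeff n) _
    refine ⟨r'.toSubring v.unitBall hr'c, ?_⟩
    apply Polynomial.map_injective (algebraMap v.unitBall A) hinj
    rw [Polynomial.map_mul, Polynomial.map_sub, Polynomial.map_mul, Polynomial.map_C,
      Polynomial.map_X, Polynomial.map_C, halg, Polynomial.map_toSubring]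
    have hPs : Polynomial.map v.unitBall.subtype p = P := rfl
    have hts : v.unitBall.subtype t = (t : A) := rfl
    have hss : v.unitBall.subtype s = (s : A) := rfl
    rw [hPs, hts, hss, hq, ht, hs, hr']
    have e1 : (↑θ⁻¹ * ↑α : A) * u = 1 := by
      rw [hu, mul_mul_mul_comm, Units.inv_mul, Units.mul_inv, one_mul]
    have e2 : (↑θ⁻¹ * φ : A) * u = c := by
      rw [hu, hc, mul_mul_mul_comm, Units.inv_mul, one_mul, mul_comm]
    calc (Polynomial.X - Polynomial.C c) * q
        = Polynomial.C ((↑θ⁻¹ * ↑α : A) * u) * (Polynomial.X * q)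
            - Polynomial.C ((↑θ⁻¹ * φ : A) * u) * q := by rw [e1, e2, Polynomial.C_1]; ring
      _ = (Polynomial.C (↑θ⁻¹ * ↑α : A) * Polynomial.X - Polynomial.C (↑θ⁻¹ * φ : A))
            * (Polynomial.C u * q) := by simp only [Polynomial.C_mul]; ring
  · rintro ⟨r, rfl⟩
    rw [map_mul]
    have h0 : Polynomial.aeval (R := v.unitBall) c (Polynomial.C t * Polynomial.X - Polynomial.C s) = 0 := by
      rw [map_sub, map_mul, Polynomial.aeval_C, Polynomial.aeval_X, Polynomial.aeval_C]
      show (↑t : A) * c - ↑s = 0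
      rw [ht, hs, hc, mul_assoc, ← mul_assoc (↑α : A) (↑α⁻¹ : A) φ, Units.mul_inv, one_mul,
        sub_self]
    rw [h0, zero_mul]
end
end

section
/- Let (K, v_K) be a field with a non-trivial real-valued valuation and let (A, v) be a semi-valued (K, v_K)-algebra which is a domain with ker v = {0}. Let α, β ∈ A^× be units with v(α) ≤ v(β) (so α⁻¹β ∈ A°), and let T be an indeterminate. Then the kernel of the A°-algebra homomorphism A°[X, Y] → A[T, T⁻¹] sending X to α⁻¹T and Y to βT⁻¹ is the principal ideal generated by X·Y − α⁻¹β; in particular A°[X, Y]/(X·Y − α⁻¹β) is isomorphic to the subring A°[α⁻¹T, βT⁻¹] of A[T, T⁻¹] and is a domain. -/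
noncomputable section

open MvPolynomial LaurentPolynomial


theorem aux_ker {A : Type*} [CommRing A] [IsDomain A] (R : Subring A)
    (α β : Aˣ) (u : R) (hu : (u : A) = ↑α⁻¹ * ↑β) :
    RingHom.ker (MvPolynomial.aeval (R := R)
        ![LaurentPolynomial.C (↑α⁻¹ : A) * LaurentPolynomial.T 1,
          LaurentPolynomial.C (↑β : A) * LaurentPolynomial.T (-1)]) =
      Ideal.span {MvPolynomial.X 0 * MvPolynomial.X 1 - MvPolynomial.C u} := by
  classical
  set φ := MvPolynomial.aeval (R := R)
        ![LaurentPolynomial.C (↑α⁻¹ : A) * LaurentPolynomial.T 1,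
          LaurentPolynomial.C (↑β : A) * LaurentPolynomial.T (-1)] with hφ
  set g : MvPolynomial (Fin 2) R := MvPolynomial.X 0 * MvPolynomial.X 1 - MvPolynomial.C u with hg
  have halg : ∀ c : R, (algebraMap R (LaurentPolynomial A)) c = LaurentPolynomial.C (c : A) := by
    intro c; rw [LaurentPolynomial.algebraMap_apply]; rfl
  -- the generator is in the kernel
  have hgen : φ g = 0 := by
    simp only [hφ, hg, map_sub, map_mul, aeval_X, aeval_C, Matrix.cons_val_zero,
      Matrix.cons_val_one, Matrix.head_cons]
    rw [halg, hu, mul_mul_mul_comm, ← LaurentPolynomial.T_add, add_neg_cancel,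
      LaurentPolynomial.T_zero, mul_one, ← map_mul, sub_self]
  have hsub : Ideal.span {g} ≤ RingHom.ker φ := by
    rw [Ideal.span_le, Set.singleton_subset_iff]; exact hgen
  -- image of a monomial
  have hmon : ∀ (d : Fin 2 →₀ ℕ) (c : R),
      φ (monomial d c) = (AddMonoidAlgebra.single ((d 0 : ℤ) - d 1)
        ((c : A) * (↑α⁻¹ : A) ^ d 0 * (↑β : A) ^ d 1) : LaurentPolynomial A) := by
    intro d c
    rw [hφ, aeval_monomial, Finsupp.prod_fintype _ _ (fun i => pow_zero _), Fin.prod_univ_two]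
    simp only [Matrix.cons_val_zero, Matrix.cons_val_one, Matrix.head_cons]
    rw [mul_pow, mul_pow, ← map_pow, ← map_pow, LaurentPolynomial.T_pow,
      LaurentPolynomial.T_pow, halg, mul_mul_mul_comm (LaurentPolynomial.C _) (T _),
      ← LaurentPolynomial.T_add, ← map_mul, ← mul_assoc, ← map_mul,
      ← LaurentPolynomial.single_eq_C_mul_T]
    congr 1
    · push_cast; ring
    · ring
  -- every exponent is a sum of two singles
  have hD : ∀ d : Fin 2 →₀ ℕ, d = Finsupp.single 0 (d 0) + Finsupp.single 1 (d 1) := by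
    intro d; ext x; fin_cases x <;> simp [Finsupp.add_apply, Finsupp.single_apply]
  have happ0 : ∀ i j : ℕ, ((Finsupp.single (0 : Fin 2) i + Finsupp.single 1 j : Fin 2 →₀ ℕ)) 0 = i := by
    intro i j
    rw [Finsupp.add_apply, Finsupp.single_eq_same, Finsupp.single_eq_of_ne (by decide), add_zero]
  have happ1 : ∀ i j : ℕ, ((Finsupp.single (0 : Fin 2) i + Finsupp.single 1 j : Fin 2 →₀ ℕ)) 1 = j := by
    intro i j
    rw [Finsupp.add_apply, Finsupp.single_eq_same, Finsupp.single_eq_of_ne (by decide), zero_add]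
  have hme : ∀ (i j : ℕ) (c : R),
      monomial (Finsupp.single (0 : Fin 2) i + Finsupp.single 1 j) c
        = MvPolynomial.C c * (X 0 ^ i * X 1 ^ j) := by
    intro i j c
    rw [monomial_eq, Finsupp.prod_fintype _ _ (fun i => pow_zero _), Fin.prod_univ_two,
      happ0, happ1]
  -- reduction of a single monomial modulo g
  have hB : ∀ (i j n : ℕ) (c : R),
      monomial (Finsupp.single (0 : Fin 2) (i + n) + Finsupp.single 1 (j + n)) c
        - monomial (Finsupp.single (0 : Fin 2) i + Finsupp.single 1 j) (c * u ^ n)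
        ∈ Ideal.span {g} := by
    intro i j n c
    rw [Ideal.mem_span_singleton, hme, hme, map_mul, map_pow]
    obtain ⟨k, hk⟩ := sub_dvd_pow_sub_pow (MvPolynomial.X 0 * MvPolynomial.X 1 : MvPolynomial (Fin 2) R) (MvPolynomial.C u) n
    refine ⟨MvPolynomial.C c * (X 0 ^ i * X 1 ^ j) * k, ?_⟩
    rw [hg]
    linear_combination (MvPolynomial.C c * (X 0 ^ i * X 1 ^ j)) * hk
  -- injectivity on reduced polynomials
  have hD2 : ∀ q : MvPolynomial (Fin 2) R, (∀ e ∈ q.support, min (e 0) (e 1) = 0) →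
      φ q = 0 → q = 0 := by
    intro q hsup hq0
    by_contra hne
    obtain ⟨e, he⟩ := MvPolynomial.ne_zero_iff.mp hne
    have heS : e ∈ q.support := MvPolynomial.mem_support_iff.mpr he
    have h2 : (φ q).coeff ((e 0 : ℤ) - e 1) = 0 := by rw [hq0]; rfl
    rw [q.as_sum, map_sum, Finset.sum_congr rfl (fun d _ => hmon d (coeff d q)),
      AddMonoidAlgebra.coeff_sum, Finsupp.finset_sum_apply] at h2; simp only [AddMonoidAlgebra.coeff_single] at h2
    rw [Finset.sum_eq_single_of_mem e heS] at h2
    · rw [Finsupp.single_eq_same] at h2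
      rcases mul_eq_zero.mp h2 with h3 | h3
      · rcases mul_eq_zero.mp h3 with h4 | h4
        · exact he (Subtype.ext h4)
        · exact pow_ne_zero _ (Units.ne_zero α⁻¹) h4
      · exact pow_ne_zero _ (Units.ne_zero β) h3
    · intro d hd hde
      apply Finsupp.single_eq_of_ne
      intro hcontra
      apply hde
      have hd0 : min (d 0) (d 1) = 0 := hsup d hd
      have he0 : min (e 0) (e 1) = 0 := hsup e heS
      have h5 : d 0 = e 0 ∧ d 1 = e 1 := by omega
      rw [hD d, hD e, h5.1, h5.2]
  -- now the kernel is contained in the span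
  refine le_antisymm ?_ hsub
  intro p hp
  rw [RingHom.mem_ker] at hp
  set md : (Fin 2 →₀ ℕ) → ℕ := fun d => min (d 0) (d 1) with hmd
  set q : MvPolynomial (Fin 2) R := ∑ d ∈ p.support,
      monomial (Finsupp.single (0 : Fin 2) (d 0 - md d) + Finsupp.single 1 (d 1 - md d))
        (coeff d p * u ^ md d) with hq
  have hpq : p - q ∈ Ideal.span {g} := by
    nth_rewrite 1 [p.as_sum]
    rw [hq, ← Finset.sum_sub_distrib]
    refine Ideal.sum_mem _ fun d hd => ?_
    have := hB (d 0 - md d) (d 1 - md d) (md d) (coeff d p)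
    rwa [show Finsupp.single (0 : Fin 2) (d 0 - md d + md d)
        + Finsupp.single 1 (d 1 - md d + md d) = d from by
      ext x; fin_cases x <;> simp [Finsupp.add_apply, Finsupp.single_apply, hmd] <;> omega] at this
  have hφq : φ q = 0 := by
    have h6 := hsub hpq
    rw [RingHom.mem_ker, map_sub, hp, zero_sub, neg_eq_zero] at h6
    exact h6
  have hqsup : ∀ e ∈ q.support, min (e 0) (e 1) = 0 := by
    intro e he
    obtain ⟨d, _, hed⟩ := Finset.mem_biUnion.mp (MvPolynomial.support_sum (by rw [hq] at he; exact he))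
    have := MvPolynomial.support_monomial_subset hed
    rw [Finset.mem_singleton] at this
    subst this
    rw [happ0, happ1]
    simp only [hmd]
    omega
  have hq0 : q = 0 := hD2 q hqsup hφq
  rw [hq0, sub_zero] at hpq
  exact hpq

/-- Let `(A, v)` be a semi-valued `(K, v_K)`-algebra which is a domain with
trivial kernel, let `α, β ∈ A^×` with `v(α) ≤ v(β)`, and let `T` be an indeterminate.  Then the
kernel of the `A°`-algebra map `A°[X, Y] → A[T, T⁻¹]` sending `X ↦ α⁻¹T` and `Y ↦ βT⁻¹` is the
principal ideal generated by `X·Y − α⁻¹β`; in particular `A°[X, Y]/(X·Y − α⁻¹β)` is isomorphic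
to the subring `A°[α⁻¹T, βT⁻¹]` of `A[T, T⁻¹]` and is a domain. -/
theorem kernel_aeval_laurent_annulus
    {K A : Type*} [Field K] [CommRing A] [IsDomain A] [Algebra K A]
    (vK : AddValuation K (WithTop ℝ)) (hnt : vK.IsNontrivial)
    (v : AddValuation A (WithTop ℝ))
    (hext : ∀ x : K, v (algebraMap K A x) = vK x)
    (hker : ∀ x : A, v x = ⊤ → x = 0)
    (α β : Aˣ) (hαβ : v ↑α ≤ v ↑β)
    (u : v.unitBall) (hu : (u : A) = ↑α⁻¹ * ↑β) :
    RingHom.ker (MvPolynomial.aeval (R := v.unitBall)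
        ![LaurentPolynomial.C (↑α⁻¹ : A) * LaurentPolynomial.T 1,
          LaurentPolynomial.C (↑β : A) * LaurentPolynomial.T (-1)]) =
      Ideal.span {MvPolynomial.X 0 * MvPolynomial.X 1 - MvPolynomial.C u} ∧
    IsDomain (MvPolynomial (Fin 2) v.unitBall ⧸
      Ideal.span {MvPolynomial.X 0 * MvPolynomial.X 1 - MvPolynomial.C u}) := by
  have hker' := aux_ker v.unitBall α β u hu
  refine ⟨hker', ?_⟩
  letI : IsDomain (LaurentPolynomial A) := NoZeroDivisors.to_isDomain _
  set f := (MvPolynomial.aeval (R := v.unitBall)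
      ![LaurentPolynomial.C (↑α⁻¹ : A) * LaurentPolynomial.T 1,
        LaurentPolynomial.C (↑β : A) * LaurentPolynomial.T (-1)]).toRingHom with hf
  have heq : Ideal.span {MvPolynomial.X 0 * MvPolynomial.X 1 - MvPolynomial.C u}
      = RingHom.ker f := by
    rw [← hker']; rfl
  exact MulEquiv.isDomain _
    ((Ideal.quotEquivOfEq heq).trans (RingHom.quotientKerEquivRange f)).toMulEquiv
end
end

section
/- Let (K, v_K) be a field with a non-trivial real-valued valuation and let (A, v) be a semi-valued (K, v_K)-algebra which is a domain with ker v = {0}. Let φ ∈ A and let θ, α, β ∈ A^× be units with v(θ) = v(φ) ≤ v(α) ≤ v(β) (so θ⁻¹α, θ⁻¹φ and α⁻¹β lie in A°). Then the two-element sequence [X·Y − α⁻¹β, (θ⁻¹α)·X − θ⁻¹φ] is a regular sequence in the polynomial ring A°[X, Y]: the first element is a nonzerodivisor, the second is a nonzerodivisor modulo the first, and the ideal they generate is proper. -/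
set_option synthInstance.maxHeartbeats 800000
set_option maxHeartbeats 1600000

noncomputable section

set_option linter.unusedSectionVars false

namespace RegSeqAux

open Polynomial

variable {R : Type*} [CommRing R] [IsDomain R]

def auxF (c : R) : Polynomial (Polynomial R) :=
  Polynomial.C Polynomial.X * Polynomial.X - Polynomial.C (Polynomial.C c)

def auxG (d e : R) : Polynomial (Polynomial R) :=
  Polynomial.C (Polynomial.C d) * Polynomial.X - Polynomial.C (Polynomial.C e)

lemma divT (c : R) (p : Polynomial (Polynomial R)) :
    ∃ (h : Polynomial (Polynomial R)) (P q : Polynomial R),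
      p = auxF c * h + P.map Polynomial.C + Polynomial.C (Polynomial.X * q) := by
  induction p using Polynomial.induction_on with
  | C a =>
    refine ⟨0, Polynomial.C (a.coeff 0), a.divX, ?_⟩
    rw [mul_zero, zero_add, Polynomial.map_C, ← Polynomial.C_add]
    congr 1
    rw [add_comm, mul_comm, Polynomial.divX_mul_X_add]
  | add p q hp hq =>
    obtain ⟨h1, P1, q1, e1⟩ := hp
    obtain ⟨h2, P2, q2, e2⟩ := hq
    refine ⟨h1 + h2, P1 + P2, q1 + q2, ?_⟩
    rw [e1, e2]
    simp only [Polynomial.map_add, Polynomial.C_add, Polynomial.C_mul, mul_add]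
    ring
  | monomial n a ih =>
    obtain ⟨h, P, q, e⟩ := ih
    obtain ⟨q1, q0, hq⟩ : ∃ q1 q0, q = q1 * Polynomial.X + Polynomial.C q0 :=
      ⟨q.divX, q.coeff 0, (Polynomial.divX_mul_X_add q).symm⟩
    refine ⟨h * Polynomial.X + Polynomial.C q,
      P * Polynomial.X + Polynomial.C c * Polynomial.C q0,
      Polynomial.C c * q1, ?_⟩
    have hstep : (Polynomial.C a : Polynomial (Polynomial R)) * Polynomial.X ^ (n + 1)
        = (Polynomial.C a * Polynomial.X ^ n) * Polynomial.X := by ring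
    rw [hstep, e, hq]
    simp only [Polynomial.map_add, Polynomial.map_mul, Polynomial.map_C, Polynomial.map_X,
      Polynomial.C_mul, Polynomial.C_add]
    unfold auxF
    ring

lemma lemA (c : R) (k : Polynomial (Polynomial R)) (P r : Polynomial R)
    (hE : auxF c * k = P.map Polynomial.C + Polynomial.C r) : k = 0 := by
  by_contra hk
  have h1 : (auxF c * k).coeff (k.natDegree + 1)
      = Polynomial.X * k.coeff k.natDegree := by
    unfold auxF
    rw [sub_mul, Polynomial.coeff_sub, mul_assoc, Polynomial.coeff_C_mul,
      Polynomial.coeff_X_mul, Polynomial.coeff_C_mul,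
      Polynomial.coeff_eq_zero_of_natDegree_lt (lt_add_one _), mul_zero, sub_zero]
  have h2 : (P.map Polynomial.C + Polynomial.C r).coeff (k.natDegree + 1)
      = Polynomial.C (P.coeff (k.natDegree + 1)) := by
    rw [Polynomial.coeff_add, Polynomial.coeff_map, Polynomial.coeff_C,
      if_neg (Nat.succ_ne_zero _), add_zero]
  have h3 : Polynomial.X * k.coeff k.natDegree
      = Polynomial.C (P.coeff (k.natDegree + 1)) := by
    rw [← h1, ← h2, hE]
  have hlead : k.coeff k.natDegree ≠ 0 := by
    rw [← Polynomial.leadingCoeff]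
    exact mt Polynomial.leadingCoeff_eq_zero.mp hk
  have hdeg := congrArg Polynomial.natDegree h3
  rw [Polynomial.natDegree_mul Polynomial.X_ne_zero hlead, Polynomial.natDegree_X,
    Polynomial.natDegree_C] at hdeg
  omega

lemma lemT1 (c d e : R) (hc : c ≠ 0) (hd : d ≠ 0) (w : Polynomial (Polynomial R))
    (hw : auxF c ∣ auxG d e * w) : auxF c ∣ w := by
  obtain ⟨H, hH⟩ := hw
  obtain ⟨h, P, q, rfl⟩ := divT c w
  have key : auxF c * (H - auxG d e * h - Polynomial.C (Polynomial.C d * q)) =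
      (Polynomial.C d * P * Polynomial.X - Polynomial.C e * P).map Polynomial.C +
        Polynomial.C (Polynomial.C (c * d) * q
          - Polynomial.C e * (Polynomial.X * q)) := by
    have h2 := hH
    simp only [Polynomial.map_sub, Polynomial.map_mul, Polynomial.map_C, Polynomial.map_X,
      Polynomial.C_mul, Polynomial.C_sub, Polynomial.C_add] at h2 ⊢
    unfold auxF auxG at h2 ⊢
    linear_combination -h2
  have hk0 : H - auxG d e * h - Polynomial.C (Polynomial.C d * q) = 0 := lemA c _ _ _ key
  have hU : (Polynomial.C d * P * Polynomial.X - Polynomial.C e * P).map Polynomial.C +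
      Polynomial.C (Polynomial.C (c * d) * q - Polynomial.C e * (Polynomial.X * q)) = 0 := by
    rw [← key, hk0, mul_zero]
  have hP2 : ∀ n, d * P.coeff n - e * P.coeff (n + 1) = 0 := by
    intro n
    have h4 : ((Polynomial.C d * P * Polynomial.X - Polynomial.C e * P).map Polynomial.C +
        Polynomial.C (Polynomial.C (c * d) * q
          - Polynomial.C e * (Polynomial.X * q))).coeff (n + 1) = 0 := by
      rw [hU, Polynomial.coeff_zero]
    rw [Polynomial.coeff_add, Polynomial.coeff_map, Polynomial.coeff_C,
      if_neg (Nat.succ_ne_zero _), add_zero, Polynomial.C_eq_zero, Polynomial.coeff_sub,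
      Polynomial.coeff_mul_X, Polynomial.coeff_C_mul, Polynomial.coeff_C_mul] at h4
    exact h4
  have hP : P = 0 := by
    by_contra hP
    have hn := hP2 P.natDegree
    rw [Polynomial.coeff_eq_zero_of_natDegree_lt (lt_add_one _), mul_zero, sub_zero] at hn
    rcases mul_eq_zero.mp hn with h' | h'
    · exact hd h'
    · exact hP (Polynomial.leadingCoeff_eq_zero.mp h')
  have hr : Polynomial.C (c * d) * q - Polynomial.C e * (Polynomial.X * q) = 0 := by
    have h6 := hU
    rw [hP] at h6
    simp only [mul_zero, zero_mul, sub_zero, Polynomial.map_zero, zero_add,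
      Polynomial.C_eq_zero] at h6
    exact h6
  have hr' : Polynomial.C (c * d) * q = Polynomial.C e * (Polynomial.X * q) :=
    sub_eq_zero.mp hr
  have hcd : c * d ≠ 0 := mul_ne_zero hc hd
  have hqc : ∀ n, q.coeff n = 0 := by
    intro n
    induction n with
    | zero =>
      have h5 := congrArg (fun z => Polynomial.coeff z 0) hr'
      simp only [Polynomial.coeff_C_mul, Polynomial.mul_coeff_zero, Polynomial.coeff_X_zero,
        Polynomial.coeff_C_zero, zero_mul, mul_zero] at h5
      exact (mul_eq_zero.mp h5).resolve_left hcd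
    | succ n ihn =>
      have h5 := congrArg (fun z => Polynomial.coeff z (n + 1)) hr'
      simp only [Polynomial.coeff_C_mul, Polynomial.coeff_X_mul] at h5
      rw [ihn, mul_zero] at h5
      exact (mul_eq_zero.mp h5).resolve_left hcd
  have hq0 : q = 0 := Polynomial.ext fun n => by rw [hqc n, Polynomial.coeff_zero]
  refine ⟨h, ?_⟩
  rw [hP, hq0]
  simp

def toBi : MvPolynomial (Fin 2) R ≃ₐ[R] Polynomial (Polynomial R) :=
  (MvPolynomial.finSuccEquiv R 1).trans <|
    Polynomial.mapAlgEquiv <|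
      (MvPolynomial.finSuccEquiv R 0).trans
        (Polynomial.mapAlgEquiv (MvPolynomial.isEmptyAlgEquiv R (Fin 0)))

lemma toBi_X0 : (toBi : MvPolynomial (Fin 2) R ≃ₐ[R] _) (MvPolynomial.X 0) = Polynomial.X := by
  rw [toBi, AlgEquiv.trans_apply, MvPolynomial.finSuccEquiv_X_zero,
    Polynomial.coe_mapAlgEquiv, Polynomial.map_X]

lemma toBi_X1 : (toBi : MvPolynomial (Fin 2) R ≃ₐ[R] _) (MvPolynomial.X 1)
    = Polynomial.C Polynomial.X := by
  have h1 : (1 : Fin 2) = Fin.succ 0 := rfl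
  rw [toBi, AlgEquiv.trans_apply, h1, MvPolynomial.finSuccEquiv_X_succ,
    Polynomial.coe_mapAlgEquiv, Polynomial.map_C, RingHom.coe_coe, AlgEquiv.trans_apply,
    MvPolynomial.finSuccEquiv_X_zero, Polynomial.coe_mapAlgEquiv, Polynomial.map_X]

lemma toBi_C (a : R) : (toBi : MvPolynomial (Fin 2) R ≃ₐ[R] _) (MvPolynomial.C a)
    = Polynomial.C (Polynomial.C a) := by
  have hC : ∀ (n : ℕ) (b : R),
      MvPolynomial.finSuccEquiv R n (MvPolynomial.C b)
        = Polynomial.C (MvPolynomial.C b) := by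
    intro n b
    rw [MvPolynomial.finSuccEquiv_apply, MvPolynomial.eval₂Hom_C, RingHom.comp_apply]
  rw [toBi, AlgEquiv.trans_apply, hC, Polynomial.coe_mapAlgEquiv, Polynomial.map_C,
    RingHom.coe_coe, AlgEquiv.trans_apply, hC, Polynomial.coe_mapAlgEquiv, Polynomial.map_C,
    RingHom.coe_coe]
  congr 1
  rw [← MvPolynomial.isEmptyAlgEquiv_symm_apply (R := R) (σ := Fin 0) a, AlgEquiv.apply_symm_apply]

lemma lemS1 (c d e : R) (hc : c ≠ 0) (hd : d ≠ 0) (p : MvPolynomial (Fin 2) R)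
    (h : (MvPolynomial.X 0 * MvPolynomial.X 1 - MvPolynomial.C c)
      ∣ (MvPolynomial.C d * MvPolynomial.X 0 - MvPolynomial.C e) * p) :
    (MvPolynomial.X 0 * MvPolynomial.X 1 - MvPolynomial.C c) ∣ p := by
  have hEf : (toBi : MvPolynomial (Fin 2) R ≃ₐ[R] _)
      (MvPolynomial.X 0 * MvPolynomial.X 1 - MvPolynomial.C c) = auxF c := by
    rw [map_sub, map_mul, toBi_X0, toBi_X1, toBi_C]
    unfold auxF
    ring
  have hEg : (toBi : MvPolynomial (Fin 2) R ≃ₐ[R] _)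
      (MvPolynomial.C d * MvPolynomial.X 0 - MvPolynomial.C e) = auxG d e := by
    rw [map_sub, map_mul, toBi_X0, toBi_C, toBi_C]
    unfold auxG
    ring
  have h2 : auxF c ∣ auxG d e * toBi p := by
    rw [← hEf, ← hEg, ← map_mul]
    obtain ⟨k, hk⟩ := h
    exact ⟨toBi k, by rw [hk, map_mul]⟩
  obtain ⟨t, ht⟩ := lemT1 c d e hc hd _ h2
  refine ⟨toBi.symm t, toBi.injective ?_⟩
  rw [map_mul, hEf, AlgEquiv.apply_symm_apply, ht]

lemma auxF_ne_zero (c : R) : auxF c ≠ 0 := by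
  intro h0
  have h1 : (auxF c).coeff 1 = Polynomial.X := by
    unfold auxF
    rw [Polynomial.coeff_sub, Polynomial.coeff_mul_X, Polynomial.coeff_C_zero,
      Polynomial.coeff_C, if_neg one_ne_zero, sub_zero]
  rw [h0, Polynomial.coeff_zero] at h1
  exact Polynomial.X_ne_zero h1.symm

lemma fS_ne_zero (c : R) :
    (MvPolynomial.X 0 * MvPolynomial.X 1 - MvPolynomial.C c : MvPolynomial (Fin 2) R) ≠ 0 := by
  intro h0
  apply auxF_ne_zero c
  have hEf : (toBi : MvPolynomial (Fin 2) R ≃ₐ[R] _)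
      (MvPolynomial.X 0 * MvPolynomial.X 1 - MvPolynomial.C c) = auxF c := by
    rw [map_sub, map_mul, toBi_X0, toBi_X1, toBi_C]
    unfold auxF
    ring
  rw [← hEf, h0, map_zero]


end RegSeqAux

open Pointwise


/-- Let `(A, v)` be a semi-valued `(K, v_K)`-algebra which is a domain with
trivial kernel, `φ ∈ A`, and `θ, α, β ∈ A^×` with `v(θ) = v(φ) ≤ v(α) ≤ v(β)`.  Then
`[X·Y − α⁻¹β, (θ⁻¹α)·X − θ⁻¹φ]` is a regular sequence in `A°[X, Y]`: the first element is a
nonzerodivisor, the second is a nonzerodivisor modulo the first, and the ideal they generate is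
proper. -/
theorem regular_sequence_enlargement
    {K A : Type*} [Field K] [CommRing A] [IsDomain A] [Algebra K A]
    (vK : AddValuation K (WithTop ℝ)) (hnt : vK.IsNontrivial)
    (v : AddValuation A (WithTop ℝ))
    (hext : ∀ x : K, v (algebraMap K A x) = vK x)
    (hker : ∀ x : A, v x = ⊤ → x = 0)
    (φ : A) (θ α β : Aˣ) (hθ : v ↑θ = v φ) (hα : v φ ≤ v ↑α) (hβ : v ↑α ≤ v ↑β)
    (u₁ u₂ u₃ : v.unitBall)
    (hu₁ : (u₁ : A) = ↑α⁻¹ * ↑β) (hu₂ : (u₂ : A) = ↑θ⁻¹ * ↑α) (hu₃ : (u₃ : A) = ↑θ⁻¹ * φ) :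
    RingTheory.Sequence.IsRegular (MvPolynomial (Fin 2) v.unitBall)
      [(MvPolynomial.X 0 * MvPolynomial.X 1 - MvPolynomial.C u₁ :
          MvPolynomial (Fin 2) v.unitBall),
       (MvPolynomial.C u₂ * MvPolynomial.X 0 - MvPolynomial.C u₃ :
          MvPolynomial (Fin 2) v.unitBall)] := by
  classical
  have hθtop : v (θ : A) ≠ ⊤ := by
    intro htop
    have h1 : v ((θ : A) * ((θ⁻¹ : Aˣ) : A)) = v (θ : A) + v ((θ⁻¹ : Aˣ) : A) :=
      v.map_mul _ _
    rw [Units.mul_inv, v.map_one, htop, top_add] at h1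
    simp at h1
  have hφ : φ ≠ 0 := by
    intro h0
    rw [h0, v.map_zero] at hθ
    exact hθtop hθ
  have hc : u₁ ≠ 0 := by
    intro h0
    have h1 : (u₁ : A) = 0 := by rw [h0]; rfl
    rw [hu₁] at h1
    exact (mul_ne_zero (Units.ne_zero _) (Units.ne_zero _)) h1
  have hd : u₂ ≠ 0 := by
    intro h0
    have h1 : (u₂ : A) = 0 := by rw [h0]; rfl
    rw [hu₂] at h1
    exact (mul_ne_zero (Units.ne_zero _) (Units.ne_zero _)) h1
  set S := MvPolynomial (Fin 2) v.unitBall with hS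
  set f : S := MvPolynomial.X 0 * MvPolynomial.X 1 - MvPolynomial.C u₁ with hf
  set g : S := MvPolynomial.C u₂ * MvPolynomial.X 0 - MvPolynomial.C u₃ with hg
  have hf0 : f ≠ 0 := RegSeqAux.fS_ne_zero u₁
  -- the evaluation map used for properness
  have hψ : Function.Injective (algebraMap A (FractionRing A)) :=
    IsFractionRing.injective A (FractionRing A)
  have hψφ : algebraMap A (FractionRing A) φ ≠ 0 := fun h => hφ (hψ (by rw [h, map_zero]))
  set ψ : A →+* FractionRing A := algebraMap A (FractionRing A) with hψdef
  set ev : S →+* FractionRing A :=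
    MvPolynomial.eval₂Hom (ψ.comp v.unitBall.subtype)
      (fun i => if i = 0 then ψ ((α⁻¹ : Aˣ) * φ) else ψ (β : A) / ψ φ) with hev
  have hevX0 : ev (MvPolynomial.X 0) = ψ ((α⁻¹ : Aˣ) * φ) := by
    rw [hev, MvPolynomial.eval₂Hom_X', if_pos rfl]
  have hevX1 : ev (MvPolynomial.X 1) = ψ (β : A) / ψ φ := by
    rw [hev, MvPolynomial.eval₂Hom_X', if_neg (by decide)]
  have hevC : ∀ u : v.unitBall, ev (MvPolynomial.C u) = ψ (u : A) := by
    intro u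
    rw [hev, MvPolynomial.eval₂Hom_C, RingHom.comp_apply]
    rfl
  have hevf : ev f = 0 := by
    rw [hf, map_sub, map_mul, hevX0, hevX1, hevC, hu₁, sub_eq_zero]
    rw [← mul_div_assoc, div_eq_iff hψφ, ← map_mul, ← map_mul]
    congr 1
    ring
  have hevg : ev g = 0 := by
    rw [hg, map_sub, map_mul, hevX0, hevC, hevC, hu₂, hu₃, ← map_mul, ← map_sub]
    have h2 : ((θ⁻¹ : Aˣ) : A) * (α : A) * (((α⁻¹ : Aˣ) : A) * φ)
        - ((θ⁻¹ : Aˣ) : A) * φ = 0 := by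
      rw [show ((θ⁻¹ : Aˣ) : A) * (α : A) * (((α⁻¹ : Aˣ) : A) * φ)
          = ((θ⁻¹ : Aˣ) : A) * ((α : A) * ((α⁻¹ : Aˣ) : A)) * φ by ring,
        Units.mul_inv, mul_one]
      ring
    rw [h2, map_zero]
  have hsm : (f • (⊤ : Submodule S S)) = (Ideal.span {f} : Ideal S) := by
    rw [← Submodule.ideal_span_singleton_smul, Ideal.smul_eq_mul, Ideal.mul_top]
  refine ⟨?_, ?_⟩
  · -- weakly regular
    rw [RingTheory.Sequence.isWeaklyRegular_cons_iff]
    refine ⟨?_, ?_⟩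
    · intro a b hab
      simp only [smul_eq_mul] at hab
      exact mul_left_cancel₀ hf0 hab
    · rw [RingTheory.Sequence.isWeaklyRegular_cons_iff]
      refine ⟨?_, RingTheory.Sequence.IsWeaklyRegular.nil _ _⟩
      intro a b hab
      obtain ⟨p, rfl⟩ := Submodule.Quotient.mk_surjective _ a
      obtain ⟨q, rfl⟩ := Submodule.Quotient.mk_surjective _ b
      simp only [← Submodule.Quotient.mk_smul, smul_eq_mul] at hab
      rw [Submodule.Quotient.eq, hsm, ← mul_sub, Ideal.mem_span_singleton] at hab
      rw [Submodule.Quotient.eq, hsm, Ideal.mem_span_singleton]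
      exact RegSeqAux.lemS1 u₁ u₂ u₃ hc hd (p - q) hab
  · -- properness
    rw [Ideal.smul_eq_mul, Ideal.mul_top]
    intro hEq
    have h1 : (1 : S) ∈ Ideal.ofList [f, g] := by rw [← hEq]; trivial
    have hset : { r : S | r ∈ [f, g] } = {f, g} := by
      ext x
      simp [List.mem_cons, Set.mem_insert_iff]
    rw [Ideal.ofList, hset] at h1
    have hle : Ideal.span ({f, g} : Set S) ≤ RingHom.ker ev := by
      rw [Ideal.span_le]
      intro x hx
      rcases hx with hx | hx
      · rw [hx]; exact hevf
      · rw [Set.mem_singleton_iff.mp hx]; exact hevg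
    have h2 := hle h1
    rw [RingHom.mem_ker, map_one] at h2
    exact one_ne_zero h2
end
end

section
/- Let (K, v_K) be a field with a non-trivial real-valued valuation and let w be a semi-valuation on K[T] extending v_K. Let Ω_{K[T]/K} = K[T]·dT be the module of Kähler differentials, and let u : Ω_{K[T]/K} → ℝ ∪ {∞} be a w-semi-valuation on this module, i.e. u(ω + ω′) ≥ min(u(ω), u(ω′)) and u(g·ω) = w(g) + u(ω) for all g ∈ K[T]. Let φ ∈ K[T] be monic with u(dφ) ≥ w(φ), and let f ∈ K[T] with φ-expansion f = Σ_{i=0}^{m} aᵢ φ^i (deg aᵢ < deg φ). Assume w(f) = min_{i} (w(aᵢ) + i·w(φ)) and u(daᵢ) ≥ w(aᵢ) for all i. Then u(df) ≥ w(f). -/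
noncomputable section

/-- Let `(K, v_K)` be a field with a non-trivial real-valued valuation and `w`
a semi-valuation on `K[T]` extending `v_K`.  Let `u` be a `w`-semi-valuation on the module of
Kähler differentials `Ω_{K[T]/K}`.  Let `φ ∈ K[T]` be monic with `u(dφ) ≥ w(φ)`, and let
`f ∈ K[T]` with `φ`-expansion `f = Σ_{i=0}^m aᵢ φ^i` (with `deg aᵢ < deg φ`).  Assume
`w(f) = minᵢ (w(aᵢ) + i·w(φ))` and `u(daᵢ) ≥ w(aᵢ)` for all `i ≤ m`.  Then `u(df) ≥ w(f)`. -/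
theorem nonexpansive_of_key_expansion
    {K : Type*} [Field K]
    (vK : AddValuation K (WithTop ℝ)) (hnt : vK.IsNontrivial)
    (w : AddValuation (Polynomial K) (WithTop ℝ))
    (hext : ∀ c : K, w (Polynomial.C c) = vK c)
    (u : KaehlerDifferential K (Polynomial K) → WithTop ℝ)
    (hu_add : ∀ ω ω' : KaehlerDifferential K (Polynomial K), min (u ω) (u ω') ≤ u (ω + ω'))
    (hu_smul : ∀ (g : Polynomial K) (ω : KaehlerDifferential K (Polynomial K)),
      u (g • ω) = w g + u ω)
    (φ : Polynomial K) (hmonic : φ.Monic)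
    (hφ : w φ ≤ u (KaehlerDifferential.D K (Polynomial K) φ))
    (m : ℕ) (c : ℕ → Polynomial K) (f : Polynomial K)
    (hf : f = ∑ i ∈ Finset.range (m + 1), c i * φ ^ i)
    (hdeg : ∀ i ≤ m, (c i).degree < φ.degree)
    (hwf : w f = (Finset.range (m + 1)).inf (fun i => w (c i) + i • w φ))
    (hci : ∀ i ≤ m, w (c i) ≤ u (KaehlerDifferential.D K (Polynomial K) (c i))) :
    w f ≤ u (KaehlerDifferential.D K (Polynomial K) f) := by
  set D := KaehlerDifferential.D K (Polynomial K) with hD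
  have hu0 : u 0 = ⊤ := by
    have h := hu_smul 0 0
    rw [zero_smul, AddValuation.map_zero, top_add] at h
    exact h
  have hnat : ∀ n : ℕ, (0 : WithTop ℝ) ≤ w ((n : Polynomial K)) := by
    intro n
    induction n with
    | zero => simp [AddValuation.map_zero]
    | succ k ih =>
      push_cast
      refine le_trans (le_min ih ?_) (w.map_add _ _)
      rw [AddValuation.map_one]
  have hterm : ∀ i ∈ Finset.range (m + 1), w f ≤ u (D (c i * φ ^ i)) := by
    intro i hi
    rw [Finset.mem_range, Nat.lt_succ_iff] at hi
    have hwf_le : w f ≤ w (c i) + i • w φ := by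
      rw [hwf]
      exact Finset.inf_le (Finset.mem_range.mpr (Nat.lt_succ_of_le hi))
    rw [Derivation.leibniz]
    refine le_trans (le_min ?_ ?_) (hu_add _ _)
    · -- c i • D (φ ^ i)
      rw [Derivation.leibniz_pow]
      rcases Nat.eq_zero_or_pos i with h0 | hpos
      · subst h0
        simp [hu0]
      · rw [smul_comm (c i), ← Nat.cast_smul_eq_nsmul (Polynomial K), hu_smul, hu_smul,
          hu_smul]
        have h1 : w (c i) + i • w φ ≤
            (w ((i : Polynomial K))) + (w (c i) + (w (φ ^ (i - 1)) + u (D φ))) := by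
          have h2 : w (c i) + i • w φ ≤ w (c i) + (w (φ ^ (i - 1)) + u (D φ)) := by
            have : i • w φ = (i - 1) • w φ + w φ := by
              conv_lhs => rw [← Nat.succ_pred_eq_of_pos hpos]
              rw [succ_nsmul, Nat.pred_eq_sub_one]
            rw [this]
            refine add_le_add_right (add_le_add ?_ hφ) _
            rw [w.map_pow]
          calc w (c i) + i • w φ ≤ w (c i) + (w (φ ^ (i - 1)) + u (D φ)) := h2
            _ = 0 + (w (c i) + (w (φ ^ (i - 1)) + u (D φ))) := by rw [zero_add]
            _ ≤ _ := add_le_add_left (hnat i) _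
        exact le_trans hwf_le h1
    · rw [hu_smul]
      refine le_trans hwf_le ?_
      rw [w.map_pow, add_comm]
      exact add_le_add_right (hci i hi) _
  have hsum : ∀ s : Finset ℕ, (∀ i ∈ s, w f ≤ u (D (c i * φ ^ i))) →
      w f ≤ u (∑ i ∈ s, D (c i * φ ^ i)) := by
    intro s
    induction s using Finset.cons_induction with
    | empty => intro _; simp [hu0]
    | cons a s ha ih =>
      intro h
      rw [Finset.sum_cons]
      exact le_trans (le_min (h a (Finset.mem_cons_self a s))
        (ih fun i hi => h i (Finset.mem_cons.mpr (Or.inr hi)))) (hu_add _ _)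
  have hDf : D f = ∑ i ∈ Finset.range (m + 1), D (c i * φ ^ i) := by
    rw [hf]
    exact map_sum D.toLinearMap _ _
  rw [hDf]
  exact hsum _ hterm
end
end

section
/- Let (K, v_K) be a field with a non-trivial real-valued valuation and let (A, v) be a semi-valued (K, v_K)-algebra which is a domain with ker v = {0}. Let m, ℓ ≥ 1 be coprime integers, let α, β ∈ A^× be units with α^ℓβ^{−m} ∈ A°, and let T be an indeterminate. Then the kernel of the A°-algebra homomorphism A°[X, Z, Y] → A[T, T⁻¹] sending X to α⁻¹T^{m}, Z to αT^{−m}, and Y to β⁻¹T^{ℓ} is the ideal generated by X·Z − 1 and Z^{ℓ}·Y^{m} − α^ℓβ^{−m}; in particular the quotient A°[X, Z, Y]/(X·Z − 1, Z^{ℓ}·Y^{m} − α^ℓβ^{−m}) is isomorphic to the subring A°[α⁻¹T^{m}, αT^{−m}, β⁻¹T^{ℓ}] of A[T, T⁻¹] and is a domain. -/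
noncomputable section

open MvPolynomial LaurentPolynomial
set_option maxHeartbeats 4000000 in
set_option synthInstance.maxHeartbeats 1000000 in

theorem aux_case_aleph {A : Type*} [CommRing A] [IsDomain A] (S : Subring A)
    (m ℓ : ℕ) (hm : 1 ≤ m) (hℓ : 1 ≤ ℓ) (hcop : Nat.Coprime m ℓ)
    (α β : Aˣ)
    (g : S) (hg : (g : A) = (↑α : A) ^ ℓ * (↑β⁻¹ : A) ^ m) :
    RingHom.ker (MvPolynomial.aeval (R := S)
        ![LaurentPolynomial.C (↑α⁻¹ : A) * LaurentPolynomial.T (m : ℤ),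
          LaurentPolynomial.C (↑α : A) * LaurentPolynomial.T (-(m : ℤ)),
          LaurentPolynomial.C (↑β⁻¹ : A) * LaurentPolynomial.T (ℓ : ℤ)]) =
      Ideal.span
        {MvPolynomial.X 0 * MvPolynomial.X 1 - 1,
         (MvPolynomial.X 1 : MvPolynomial (Fin 3) S) ^ ℓ * MvPolynomial.X 2 ^ m -
           MvPolynomial.C g} ∧
    IsDomain (MvPolynomial (Fin 3) S ⧸
      Ideal.span
        {MvPolynomial.X 0 * MvPolynomial.X 1 - 1,
         (MvPolynomial.X 1 : MvPolynomial (Fin 3) S) ^ ℓ * MvPolynomial.X 2 ^ m -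
           MvPolynomial.C g}) := by
  obtain ⟨φ, hφdef⟩ : ∃ φ : MvPolynomial (Fin 3) S →ₐ[S] LaurentPolynomial A,
      φ = MvPolynomial.aeval
        ![LaurentPolynomial.C (↑α⁻¹ : A) * LaurentPolynomial.T (m : ℤ),
          LaurentPolynomial.C (↑α : A) * LaurentPolynomial.T (-(m : ℤ)),
          LaurentPolynomial.C (↑β⁻¹ : A) * LaurentPolynomial.T (ℓ : ℤ)] := ⟨_, rfl⟩
  obtain ⟨I, hIdef⟩ : ∃ I : Ideal (MvPolynomial (Fin 3) S), I = Ideal.span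
        {MvPolynomial.X 0 * MvPolynomial.X 1 - 1,
         (MvPolynomial.X 1 : MvPolynomial (Fin 3) S) ^ ℓ * MvPolynomial.X 2 ^ m -
           MvPolynomial.C g} := ⟨_, rfl⟩
  rw [← hIdef]
  have hkerφ : RingHom.ker (MvPolynomial.aeval (R := S)
        ![LaurentPolynomial.C (↑α⁻¹ : A) * LaurentPolynomial.T (m : ℤ),
          LaurentPolynomial.C (↑α : A) * LaurentPolynomial.T (-(m : ℤ)),
          LaurentPolynomial.C (↑β⁻¹ : A) * LaurentPolynomial.T (ℓ : ℤ)]) = RingHom.ker φ := by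
    rw [hφdef]
  rw [hkerφ]
  have hφ0 : φ (X 0) = LaurentPolynomial.C (↑α⁻¹ : A) * T (m : ℤ) := by
    simp [hφdef]
  have hφ1 : φ (X 1) = LaurentPolynomial.C (↑α : A) * T (-(m : ℤ)) := by
    simp [hφdef]
  have hφ2 : φ (X 2) = LaurentPolynomial.C (↑β⁻¹ : A) * T (ℓ : ℤ) := by
    simp [hφdef]
  have hφC : ∀ s : S, φ (MvPolynomial.C s) = LaurentPolynomial.C (s : A) := by
    intro s
    rw [hφdef, MvPolynomial.aeval_C]
    rfl
  have hgen1 : φ (X 0 * X 1 - 1) = 0 := by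
    rw [map_sub, map_mul, hφ0, hφ1, map_one]
    rw [mul_mul_mul_comm, ← LaurentPolynomial.T_add, add_neg_cancel, T_zero, mul_one,
      ← map_mul]
    simp
  have hgen2 : φ (X 1 ^ ℓ * X 2 ^ m - MvPolynomial.C g) = 0 := by
    rw [map_sub, map_mul, map_pow, map_pow, hφ1, hφ2, hφC, mul_pow, mul_pow,
      T_pow, T_pow, mul_mul_mul_comm, ← LaurentPolynomial.T_add, ← map_pow, ← map_pow,
      ← map_mul, hg]
    have : (ℓ : ℤ) * (-(m:ℤ)) + (m:ℤ) * (ℓ:ℤ) = 0 := by ring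
    rw [this, T_zero, mul_one, sub_self]
  have hIker : ∀ p ∈ I, φ p = 0 := by
    intro p hp
    rw [hIdef] at hp
    refine Submodule.span_induction ?_ ?_ ?_ ?_ hp
    · rintro q (rfl | rfl)
      · exact hgen1
      · exact hgen2
    · exact map_zero φ
    · intro a b _ _ ha hb; rw [map_add, ha, hb, add_zero]
    · intro a b _ hb; rw [smul_eq_mul, map_mul, hb, mul_zero]
  obtain ⟨ψ, hψπ⟩ : ∃ ψ : (MvPolynomial (Fin 3) S ⧸ I) →+* LaurentPolynomial A,
      ∀ p, ψ (Ideal.Quotient.mk I p) = φ p :=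
    ⟨Ideal.Quotient.lift I φ.toRingHom hIker, fun p => rfl⟩
  obtain ⟨x, hx⟩ : ∃ x, x = Ideal.Quotient.mk I (X 0) := ⟨_, rfl⟩
  obtain ⟨z, hz⟩ : ∃ z, z = Ideal.Quotient.mk I (X 1) := ⟨_, rfl⟩
  obtain ⟨y, hy⟩ : ∃ y, y = Ideal.Quotient.mk I (X 2) := ⟨_, rfl⟩
  have hxz : x * z = 1 := by
    have h1 : (X 0 * X 1 - 1 : MvPolynomial (Fin 3) S) ∈ I := by
      rw [hIdef]; exact Ideal.subset_span (Set.mem_insert _ _)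
    have h2 := (Ideal.Quotient.eq_zero_iff_mem).2 h1
    rw [map_sub, map_mul, map_one, sub_eq_zero] at h2
    rw [hx, hz, h2]
  obtain ⟨xu, hxuv, hxui⟩ : ∃ u : (MvPolynomial (Fin 3) S ⧸ I)ˣ,
      ((u : MvPolynomial (Fin 3) S ⧸ I) = x) ∧ ((↑u⁻¹ : MvPolynomial (Fin 3) S ⧸ I) = z) :=
    ⟨⟨x, z, hxz, by rw [mul_comm z x]; exact hxz⟩, rfl, rfl⟩
  have hrel : z ^ ℓ * y ^ m = Ideal.Quotient.mk I (MvPolynomial.C g) := by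
    have h2 : ((X 1 : MvPolynomial (Fin 3) S) ^ ℓ * X 2 ^ m - MvPolynomial.C g) ∈ I := by
      rw [hIdef]; exact Ideal.subset_span (Set.mem_insert_of_mem _ rfl)
    have h3 := (Ideal.Quotient.eq_zero_iff_mem).2 h2
    rw [map_sub, map_mul, map_pow, map_pow, sub_eq_zero] at h3
    rw [hz, hy, h3]
  have hxu1 : (↑(xu ^ (1:ℤ)) : MvPolynomial (Fin 3) S ⧸ I) = x := by rw [zpow_one, hxuv]
  have hxum1 : (↑(xu ^ (-1:ℤ)) : MvPolynomial (Fin 3) S ⧸ I) = z := by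
    rw [zpow_neg, zpow_one, hxui]
  have hzpow : ∀ k : ℕ, z ^ k = (↑(xu ^ (-(k:ℤ))) : MvPolynomial (Fin 3) S ⧸ I) := by
    intro k
    rw [zpow_neg, ← inv_zpow, zpow_natCast, ← hxui]
    norm_cast
  have hym : y ^ m = Ideal.Quotient.mk I (MvPolynomial.C g) *
      (↑(xu ^ (ℓ:ℤ)) : MvPolynomial (Fin 3) S ⧸ I) := by
    have h4 := hrel
    rw [hzpow ℓ] at h4
    calc y ^ m = (↑(xu ^ (ℓ:ℤ)) * ↑(xu ^ (-(ℓ:ℤ))) : MvPolynomial (Fin 3) S ⧸ I) * y ^ m := by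
          rw [← Units.val_mul, ← zpow_add, add_neg_cancel, zpow_zero, Units.val_one, one_mul]
      _ = ↑(xu ^ (ℓ:ℤ)) * (↑(xu ^ (-(ℓ:ℤ))) * y ^ m) := by ring
      _ = Ideal.Quotient.mk I (MvPolynomial.C g) * ↑(xu ^ (ℓ:ℤ)) := by rw [h4]; ring
  obtain ⟨n, hn⟩ : ∃ n : ℤ × Fin m → MvPolynomial (Fin 3) S ⧸ I,
      ∀ p, n p = (↑(xu ^ p.1) : MvPolynomial (Fin 3) S ⧸ I) * y ^ (p.2 : ℕ) := ⟨_, fun p => rfl⟩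
  have halg : ∀ s : S, algebraMap S (MvPolynomial (Fin 3) S ⧸ I) s =
      Ideal.Quotient.mk I (MvPolynomial.C s) := fun s => rfl
  have hone : n (0, ⟨0, hm⟩) = 1 := by rw [hn]; simp
  have hmx : ∀ p : ℤ × Fin m, x * n p = n (p.1 + 1, p.2) := by
    intro p
    calc x * n p = (↑(xu ^ ((1:ℤ) + p.1)) : MvPolynomial (Fin 3) S ⧸ I) * y ^ (p.2:ℕ) := by
          rw [hn, ← hxu1, zpow_add, Units.val_mul]; ring
      _ = n (p.1 + 1, p.2) := by rw [hn, add_comm]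
  have hmz : ∀ p : ℤ × Fin m, z * n p = n (p.1 - 1, p.2) := by
    intro p
    calc z * n p = (↑(xu ^ ((-1:ℤ) + p.1)) : MvPolynomial (Fin 3) S ⧸ I) * y ^ (p.2:ℕ) := by
          rw [hn, ← hxum1, zpow_add, Units.val_mul]; ring
      _ = n (p.1 - 1, p.2) := by rw [hn, sub_eq_neg_add]
  obtain ⟨B, hBdef⟩ : ∃ B : Submodule S (MvPolynomial (Fin 3) S ⧸ I),
      B = Submodule.span S (Set.range n) := ⟨_, rfl⟩
  have hgenB : ∀ p : ℤ × Fin m, n p ∈ B := by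
    intro p; rw [hBdef]; exact Submodule.subset_span ⟨p, rfl⟩
  have hmy : ∀ p : ℤ × Fin m, y * n p ∈ B := by
    intro p
    by_cases h : (p.2:ℕ) + 1 < m
    · have he : y * n p = n (p.1, ⟨(p.2:ℕ)+1, h⟩) := by rw [hn, hn]; ring
      rw [he]; exact hgenB _
    · have hc : (p.2:ℕ) + 1 = m := le_antisymm p.2.isLt (not_lt.1 h)
      have he : y * n p = g • n (p.1 + ℓ, ⟨0, hm⟩) := by
        rw [hn, Algebra.smul_def g (n (p.1 + ℓ, ⟨0, hm⟩)), hn, halg]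
        calc y * ((↑(xu ^ p.1) : MvPolynomial (Fin 3) S ⧸ I) * y ^ (p.2:ℕ))
            = ↑(xu ^ p.1) * y ^ ((p.2:ℕ)+1) := by ring
          _ = ↑(xu ^ p.1) * y ^ m := by rw [hc]
          _ = Ideal.Quotient.mk I (MvPolynomial.C g) *
              ((↑(xu ^ (p.1 + (ℓ:ℤ))) : MvPolynomial (Fin 3) S ⧸ I) * y ^ (0:ℕ)) := by
            rw [hym, zpow_add, Units.val_mul]; ring
      rw [he]; exact Submodule.smul_mem _ g (hgenB _)
  have hclose : ∀ w : MvPolynomial (Fin 3) S ⧸ I, (w = x ∨ w = z ∨ w = y) →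
      ∀ q ∈ B, w * q ∈ B := by
    intro w hw q hq
    rw [hBdef] at hq
    refine Submodule.span_induction ?_ ?_ ?_ ?_ hq
    · rintro _ ⟨p, rfl⟩
      rcases hw with rfl | rfl | rfl
      · rw [hmx]; exact hgenB _
      · rw [hmz]; exact hgenB _
      · exact hmy p
    · rw [mul_zero w]; exact zero_mem B
    · intro a b _ _ ha hb; rw [mul_add w a b]; exact add_mem ha hb
    · intro s a _ ha; rw [mul_smul_comm s w a]; exact Submodule.smul_mem _ s ha
  have hall : ∀ P : MvPolynomial (Fin 3) S, Ideal.Quotient.mk I P ∈ B := by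
    intro P
    induction P using MvPolynomial.induction_on with
    | C s =>
      rw [← halg, Algebra.algebraMap_eq_smul_one, ← hone]
      exact Submodule.smul_mem _ s (hgenB _)
    | add p q hp hq => rw [map_add]; exact add_mem hp hq
    | mul_X p i hp =>
      rw [map_mul, mul_comm (Ideal.Quotient.mk I p) (Ideal.Quotient.mk I (X i))]
      refine hclose _ ?_ _ hp
      fin_cases i
      · exact Or.inl hx.symm
      · exact Or.inr (Or.inl hz.symm)
      · exact Or.inr (Or.inr hy.symm)
  have hψx : ψ x = LaurentPolynomial.C (↑α⁻¹ : A) * T (m:ℤ) := by rw [hx, hψπ, hφ0]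
  have hψz : ψ z = LaurentPolynomial.C (↑α : A) * T (-(m:ℤ)) := by rw [hz, hψπ, hφ1]
  have hψy : ψ y = LaurentPolynomial.C (↑β⁻¹ : A) * T (ℓ:ℤ) := by rw [hy, hψπ, hφ2]
  have hCT : ∀ (a b : A) (i k : ℤ),
      (LaurentPolynomial.C a * T i) * (LaurentPolynomial.C b * T k)
      = LaurentPolynomial.C (a*b) * T (i+k) := by
    intro a b i k
    rw [mul_mul_mul_comm, ← map_mul, ← T_add]
  obtain ⟨e, he⟩ : ∃ e : ℤ × Fin m → ℤ,
      ∀ p, e p = p.1 * (m:ℤ) + ((p.2:ℕ):ℤ) * (ℓ:ℤ) := ⟨_, fun _ => rfl⟩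
  have hUz : ∀ j : ℤ, ∃ a : Aˣ, ψ ((↑(xu ^ j) : MvPolynomial (Fin 3) S ⧸ I)) =
      LaurentPolynomial.C (a : A) * T (j * (m:ℤ)) := by
    intro j
    induction j using Int.induction_on with
    | zero => exact ⟨1, by rw [zpow_zero]; simp⟩
    | succ i ih =>
      obtain ⟨a, ha⟩ := ih
      refine ⟨a * α⁻¹, ?_⟩
      calc ψ (↑(xu ^ ((i:ℤ)+1)) : MvPolynomial (Fin 3) S ⧸ I)
          = ψ ((↑(xu ^ (i:ℤ)) : MvPolynomial (Fin 3) S ⧸ I) * x) := by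
            rw [zpow_add_one xu (i:ℤ), Units.val_mul (xu^(i:ℤ)) xu, hxuv]
        _ = (LaurentPolynomial.C (↑a:A) * T ((i:ℤ)*m)) *
            (LaurentPolynomial.C (↑α⁻¹:A) * T (m:ℤ)) := by rw [map_mul, ha, hψx]
        _ = LaurentPolynomial.C ((↑a:A) * (↑α⁻¹:A)) * T ((i:ℤ)*m + m) := hCT _ _ _ _
        _ = LaurentPolynomial.C ((↑(a * α⁻¹):A)) * T (((i:ℤ)+1) * m) := by
            rw [Units.val_mul a α⁻¹]; congr 1; ring
    | pred i ih =>
      obtain ⟨a, ha⟩ := ih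
      refine ⟨a * α, ?_⟩
      calc ψ (↑(xu ^ (-(i:ℤ)-1)) : MvPolynomial (Fin 3) S ⧸ I)
          = ψ ((↑(xu ^ (-(i:ℤ))) : MvPolynomial (Fin 3) S ⧸ I) * z) := by
            rw [zpow_sub_one xu (-(i:ℤ)), Units.val_mul (xu^(-(i:ℤ))) xu⁻¹, hxui]
        _ = (LaurentPolynomial.C (↑a:A) * T ((-(i:ℤ))*m)) *
            (LaurentPolynomial.C (↑α:A) * T (-(m:ℤ))) := by rw [map_mul, ha, hψz]
        _ = LaurentPolynomial.C ((↑a:A) * (↑α:A)) * T ((-(i:ℤ))*m + -(m:ℤ)) := hCT _ _ _ _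
        _ = LaurentPolynomial.C ((↑(a * α):A)) * T ((-(i:ℤ)-1) * m) := by
            rw [Units.val_mul a α]; congr 1; ring
  have hψn : ∀ p : ℤ × Fin m, ∃ a : Aˣ, ψ (n p) =
      LaurentPolynomial.C (a:A) * T (e p) := by
    intro p
    obtain ⟨a, ha⟩ := hUz p.1
    refine ⟨a * β⁻¹ ^ (p.2:ℕ), ?_⟩
    have h1 : ψ (y ^ (p.2:ℕ)) =
        LaurentPolynomial.C ((↑β⁻¹ : A) ^ (p.2:ℕ)) * T (((p.2:ℕ):ℤ) * (ℓ:ℤ)) := by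
      rw [map_pow, hψy, mul_pow, ← map_pow, T_pow]
    calc ψ (n p) = ψ (↑(xu ^ p.1) : MvPolynomial (Fin 3) S ⧸ I) * ψ (y ^ (p.2:ℕ)) := by
          rw [hn, map_mul]
      _ = (LaurentPolynomial.C (↑a:A) * T (p.1*m)) *
          (LaurentPolynomial.C ((↑β⁻¹:A)^(p.2:ℕ)) * T (((p.2:ℕ):ℤ) * (ℓ:ℤ))) := by
          rw [ha, h1]
      _ = LaurentPolynomial.C ((↑a:A) * (↑β⁻¹:A)^(p.2:ℕ)) *
          T (p.1*m + ((p.2:ℕ):ℤ) * (ℓ:ℤ)) := hCT _ _ _ _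
      _ = LaurentPolynomial.C ((↑(a * β⁻¹ ^ (p.2:ℕ)):A)) * T (e p) := by
          rw [he, Units.val_mul a (β⁻¹ ^ (p.2:ℕ)), Units.val_pow_eq_pow_val]
  have heinj : Function.Injective e := by
    intro p q hpq
    rw [he, he] at hpq
    have hcop2 : IsCoprime (m:ℤ) (ℓ:ℤ) := by
      rw [Int.isCoprime_iff_gcd_eq_one, Int.gcd_natCast_natCast]
      exact hcop
    have hdvd : (m:ℤ) ∣ (((p.2:ℕ):ℤ) - ((q.2:ℕ):ℤ)) * (ℓ:ℤ) :=
      ⟨q.1 - p.1, by linear_combination hpq⟩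
    have hdvd2 : (m:ℤ) ∣ ((p.2:ℕ):ℤ) - ((q.2:ℕ):ℤ) :=
      hcop2.dvd_of_dvd_mul_right hdvd
    have hlt1 := p.2.isLt
    have hlt2 := q.2.isLt
    have habs : |((p.2:ℕ):ℤ) - ((q.2:ℕ):ℤ)| < (m:ℤ) := by
      rw [abs_lt]; omega
    have hc0 : ((p.2:ℕ):ℤ) - ((q.2:ℕ):ℤ) = 0 := Int.eq_zero_of_abs_lt_dvd hdvd2 habs
    have hc : p.2 = q.2 := by
      apply Fin.ext; omega
    have hj : p.1 = q.1 := by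
      have hm0 : (m:ℤ) ≠ 0 := by
        have : (0:ℤ) < (m:ℤ) := by exact_mod_cast hm
        omega
      have h5 : p.1 * (m:ℤ) = q.1 * (m:ℤ) := by linear_combination hpq - (ℓ:ℤ) * hc0
      exact mul_right_cancel₀ hm0 h5
    exact Prod.ext hj hc
  have hinj : Function.Injective ψ := by
    rw [injective_iff_map_eq_zero]
    intro q hq0
    obtain ⟨P, rfl⟩ := Ideal.Quotient.mk_surjective q
    have hB := hall P
    rw [hBdef] at hB
    obtain ⟨f, hf⟩ := Finsupp.mem_span_range_iff_exists_finsupp.mp hB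
    choose a ha using hψn
    have hsmul : ∀ (s : S) (p : ℤ × Fin m), ψ (s • n p) =
        AddMonoidAlgebra.single (e p) ((s:A) * (a p : A)) := by
      intro s p
      rw [Algebra.smul_def s (n p), map_mul, halg, hψπ, hφC, ha p,
        ← mul_assoc, ← map_mul, single_eq_C_mul_T]
    rw [Finsupp.sum] at hf
    have h2 := congrArg ψ hf
    rw [hq0] at h2
    have h2' : ∑ p ∈ f.support, ψ ((f p) • n p) = 0 :=
      (map_sum ψ _ f.support).symm.trans h2
    have hsum : (0:LaurentPolynomial A) =
        ∑ p ∈ f.support, AddMonoidAlgebra.single (e p) ((f p : A) * (a p : A)) :=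
      (((Finset.sum_congr rfl fun p _ => (hsmul (f p) p).symm).trans h2')).symm
    have hf0 : ∀ p₀, (f p₀ : A) = 0 := by
      intro p₀
      by_cases hp : p₀ ∈ f.support
      · have h3 := congrArg (fun (q : LaurentPolynomial A) => q.coeff (e p₀)) hsum
        simp only [AddMonoidAlgebra.coeff_sum, AddMonoidAlgebra.coeff_single, Finsupp.finset_sum_apply] at h3
        have h4 : (∑ p ∈ f.support, (Finsupp.single (e p) ((f p:A)*(a p:A))) (e p₀)) =
            (f p₀ : A) * (a p₀ : A) := by
          rw [Finset.sum_eq_single_of_mem p₀ hp]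
          · rw [Finsupp.single_apply, if_pos rfl]
          · intro b _ hb
            rw [Finsupp.single_apply, if_neg (fun hc => hb (heinj hc))]
        rw [h4] at h3
        have h6 : (f p₀ : A) * (a p₀ : A) = 0 := h3.symm
        rcases mul_eq_zero.mp h6 with h7 | h7
        · exact h7
        · exact absurd h7 (a p₀).ne_zero
      · rw [Finsupp.notMem_support_iff.mp hp]; rfl
    rw [← hf]
    apply Finset.sum_eq_zero
    intro p _
    have h9 : f p = 0 := Subtype.ext (hf0 p)
    rw [h9, zero_smul]
  constructor
  · ext P
    rw [RingHom.mem_ker]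
    constructor
    · intro hP
      have h8 : ψ (Ideal.Quotient.mk I P) = 0 := by rw [hψπ, hP]
      have h9 : Ideal.Quotient.mk I P = 0 := hinj (by rw [h8, map_zero])
      exact (Ideal.Quotient.eq_zero_iff_mem).mp h9
    · intro hP
      rw [← hψπ, Ideal.Quotient.eq_zero_iff_mem.mpr hP, map_zero]
  · haveI : IsDomain (LaurentPolynomial A) := NoZeroDivisors.to_isDomain _
    exact Function.Injective.isDomain ψ hinj


/-- Let `(A, v)` be a semi-valued `(K, v_K)`-algebra which is a domain with
trivial kernel, let `m, ℓ ≥ 1` be coprime, let `α, β ∈ A^×` with `α^ℓβ^{−m} ∈ A°`, and let `T`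
be an indeterminate.  Then the kernel of the `A°`-algebra map `A°[X, Z, Y] → A[T, T⁻¹]` sending
`X ↦ α⁻¹T^m`, `Z ↦ αT^{−m}` and `Y ↦ β⁻¹T^ℓ` is the ideal generated by `X·Z − 1` and
`Z^ℓ·Y^m − α^ℓβ^{−m}`; in particular the quotient is isomorphic to the subring
`A°[α⁻¹T^m, αT^{−m}, β⁻¹T^ℓ]` of `A[T, T⁻¹]` and is a domain. -/
theorem kernel_aeval_laurent_case_aleph
    {K A : Type*} [Field K] [CommRing A] [IsDomain A] [Algebra K A]
    (vK : AddValuation K (WithTop ℝ)) (hnt : vK.IsNontrivial)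
    (v : AddValuation A (WithTop ℝ))
    (hext : ∀ x : K, v (algebraMap K A x) = vK x)
    (hker : ∀ x : A, v x = ⊤ → x = 0)
    (m ℓ : ℕ) (hm : 1 ≤ m) (hℓ : 1 ≤ ℓ) (hcop : Nat.Coprime m ℓ)
    (α β : Aˣ)
    (g : v.unitBall) (hg : (g : A) = (↑α : A) ^ ℓ * (↑β⁻¹ : A) ^ m) :
    RingHom.ker (MvPolynomial.aeval (R := v.unitBall)
        ![LaurentPolynomial.C (↑α⁻¹ : A) * LaurentPolynomial.T (m : ℤ),
          LaurentPolynomial.C (↑α : A) * LaurentPolynomial.T (-(m : ℤ)),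
          LaurentPolynomial.C (↑β⁻¹ : A) * LaurentPolynomial.T (ℓ : ℤ)]) =
      Ideal.span
        {MvPolynomial.X 0 * MvPolynomial.X 1 - 1,
         (MvPolynomial.X 1 : MvPolynomial (Fin 3) v.unitBall) ^ ℓ * MvPolynomial.X 2 ^ m -
           MvPolynomial.C g} ∧
    IsDomain (MvPolynomial (Fin 3) v.unitBall ⧸
      Ideal.span
        {MvPolynomial.X 0 * MvPolynomial.X 1 - 1,
         (MvPolynomial.X 1 : MvPolynomial (Fin 3) v.unitBall) ^ ℓ * MvPolynomial.X 2 ^ m -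
           MvPolynomial.C g}) :=
  aux_case_aleph v.unitBall m ℓ hm hℓ hcop α β g hg
end
end
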